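/- arXiv:2209.07358 — 6 statements merged into one kernel-verified Lean document; each statement's English description precedes it below -/
import Mathlib

section
/- (Rademacher–Menshov inequality for 2-variation) Let j₀, m ∈ ℕ with j₀ < 2^m, and let (𝔞_k : k ∈ ℕ) be a sequence of complex numbers. Then V²(𝔞_j : j₀ ≤ j < 2^m) ≤ √2 · Σ_{i=0}^{m} ( Σ_{j=0}^{2^{m−i}−1} | Σ_{k ∈ U_j^i, U_j^i ⊆ [j₀, 2^m)} (𝔞_{k+1} − 𝔞_k) |² )^{1/2}, where U_j^i := [j2^i, (j+1)2^i) ∩ ℤ. -/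
open scoped ENNReal

open scoped NNReal

namespace RM4

/-- Sum of consecutive differences over `[x, y)`. -/
noncomputable def S (a : ℕ → ℂ) (x y : ℕ) : ℂ := ∑ k ∈ Finset.Ico x y, (a (k + 1) - a k)

lemma S_eq (a : ℕ → ℂ) {x y : ℕ} (h : x ≤ y) : S a x y = a y - a x := by
  rw [S, Finset.sum_Ico_eq_sub _ h, Finset.sum_range_sub, Finset.sum_range_sub]
  ring

lemma S_glue (a : ℕ → ℂ) {x y z : ℕ} (h1 : x ≤ y) (h2 : y ≤ z) :
    S a x y + S a y z = S a x z := Finset.sum_Ico_consecutive _ h1 h2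

/-- round up to a multiple of `2^i` -/
def r (i u : ℕ) : ℕ := 2 ^ i * ((u + 2 ^ i - 1) / 2 ^ i)
/-- round down to a multiple of `2^i` -/
def d (i v : ℕ) : ℕ := 2 ^ i * (v / 2 ^ i)

lemma r_zero (u : ℕ) : r 0 u = u := by simp [r]
lemma d_zero (v : ℕ) : d 0 v = v := by simp [d]
lemma dvd_r (i u : ℕ) : 2 ^ i ∣ r i u := dvd_mul_right _ _
lemma dvd_d (i v : ℕ) : 2 ^ i ∣ d i v := dvd_mul_right _ _

lemma le_r (i u : ℕ) : u ≤ r i u := by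
  have h2 : 0 < 2 ^ i := Nat.pow_pos (by norm_num)
  have h3 := Nat.div_add_mod (u + 2 ^ i - 1) (2 ^ i)
  have h4 := Nat.mod_lt (u + 2 ^ i - 1) h2
  unfold r; omega

lemma r_lt (i u : ℕ) : r i u < u + 2 ^ i := by
  have h2 : 0 < 2 ^ i := Nat.pow_pos (by norm_num)
  have h3 : 2 ^ i * ((u + 2 ^ i - 1) / 2 ^ i) ≤ u + 2 ^ i - 1 := by
    rw [mul_comm]; exact Nat.div_mul_le_self _ _
  unfold r; omega

lemma d_le (i v : ℕ) : d i v ≤ v := by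
  rw [d, mul_comm]; exact Nat.div_mul_le_self _ _

lemma lt_d (i v : ℕ) : v < d i v + 2 ^ i := by
  have h2 : 0 < 2 ^ i := Nat.pow_pos (by norm_num)
  have h3 := Nat.div_add_mod v (2 ^ i)
  have h4 := Nat.mod_lt v h2
  unfold d; omega


lemma mult_le_of_lt_add {i x w : ℕ} (hx : 2 ^ i ∣ x) (hw : 2 ^ i ∣ w)
    (h : x < w + 2 ^ i) : x ≤ w := by
  obtain ⟨p, rfl⟩ := hx; obtain ⟨q, rfl⟩ := hw
  have h2 : 0 < 2 ^ i := Nat.pow_pos (by norm_num)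
  have : p ≤ q := by nlinarith
  exact Nat.mul_le_mul_left _ this

lemma r_min {i u w : ℕ} (hw : 2 ^ i ∣ w) (huw : u ≤ w) : r i u ≤ w :=
  mult_le_of_lt_add (dvd_r i u) hw (lt_of_lt_of_le (r_lt i u) (by omega))

lemma d_max {i v w : ℕ} (hw : 2 ^ i ∣ w) (hwv : w ≤ v) : w ≤ d i v :=
  mult_le_of_lt_add hw (dvd_d i v) (lt_of_le_of_lt hwv (lt_d i v))

lemma r_le_succ (i u : ℕ) : r i u ≤ r (i + 1) u :=
  r_min ((pow_dvd_pow 2 (Nat.le_succ i)).trans (dvd_r (i+1) u)) (le_r (i+1) u)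

lemma d_succ_le (i v : ℕ) : d (i + 1) v ≤ d i v :=
  d_max ((pow_dvd_pow 2 (Nat.le_succ i)).trans (dvd_d (i+1) v)) (d_le (i+1) v)

lemma r_mono (u : ℕ) : Monotone fun i => r i u :=
  monotone_nat_of_le_succ fun i => r_le_succ i u

lemma d_anti (v : ℕ) : Antitone fun i => d i v :=
  antitone_nat_of_succ_le fun i => d_succ_le i v

/-- the ascending step is `0` or `2^i`. -/
lemma r_succ_cases (i u : ℕ) : r (i+1) u = r i u ∨ r (i+1) u = r i u + 2 ^ i := by
  have h1 := r_le_succ i u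
  have h2 : r (i+1) u < r i u + 2 ^ (i+1) := lt_of_lt_of_le (r_lt (i+1) u)
    (by have := le_r i u; omega)
  have hd : 2 ^ i ∣ r (i+1) u - r i u :=
    Nat.dvd_sub ((pow_dvd_pow 2 (Nat.le_succ i)).trans (dvd_r (i+1) u)) (dvd_r i u)
  obtain ⟨q, hq⟩ := hd
  have : q < 2 := by
    by_contra hq2
    have : 2 ^ i * 2 ≤ 2 ^ i * q := Nat.mul_le_mul_left _ (by omega)
    have h3 : 2 ^ (i+1) = 2 ^ i * 2 := by ring
    omega
  interval_cases q <;> omega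

lemma d_succ_cases (i v : ℕ) : d (i+1) v = d i v ∨ d (i+1) v + 2 ^ i = d i v := by
  have h1 := d_succ_le i v
  have h2 : d i v < d (i+1) v + 2 ^ (i+1) := lt_of_le_of_lt (d_le i v)
    (lt_d (i+1) v)
  have hd : 2 ^ i ∣ d i v - d (i+1) v :=
    Nat.dvd_sub (dvd_d i v) ((pow_dvd_pow 2 (Nat.le_succ i)).trans (dvd_d (i+1) v))
  obtain ⟨q, hq⟩ := hd
  have : q < 2 := by
    by_contra hq2
    have : 2 ^ i * 2 ≤ 2 ^ i * q := Nat.mul_le_mul_left _ (by omega)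
    have h3 : 2 ^ (i+1) = 2 ^ i * 2 := by ring
    omega
  interval_cases q <;> omega


/-- the meeting level -/
def K (m u v : ℕ) : ℕ := Nat.findGreatest (fun i => r i u ≤ d i v) m

lemma K_le (m u v : ℕ) : K m u v ≤ m := Nat.findGreatest_le m

lemma K_spec {m u v : ℕ} (huv : u ≤ v) : r (K m u v) u ≤ d (K m u v) v :=
  Nat.findGreatest_spec (P := fun i => r i u ≤ d i v) (Nat.zero_le m)
    (by simpa [r_zero, d_zero] using huv)

lemma K_not {m u v : ℕ} (h : K m u v < m) : ¬ (r (K m u v + 1) u ≤ d (K m u v + 1) v) :=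
  Nat.findGreatest_is_greatest (P := fun i => r i u ≤ d i v) (Nat.lt_succ_self _) h

lemma two_pow_diff {k x y : ℕ} (hxy : x ≤ y) (hdx : 2 ^ k ∣ x) (hdy : 2 ^ k ∣ y)
    (h : y < x + 2 ^ k + 2 ^ k) : y = x ∨ y = x + 2 ^ k := by
  have hd : 2 ^ k ∣ y - x := Nat.dvd_sub hdy hdx
  obtain ⟨q, hq⟩ := hd
  have : q < 2 := by
    by_contra hq2
    have : 2 ^ k * 2 ≤ 2 ^ k * q := Nat.mul_le_mul_left _ (by omega)
    omega
  interval_cases q <;> omega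

lemma mid_cases {m u v : ℕ} (huv : u ≤ v) (hv : v < 2 ^ m) :
    d (K m u v) v = r (K m u v) u ∨ d (K m u v) v = r (K m u v) u + 2 ^ (K m u v) := by
  have hrd := K_spec (m := m) huv
  have hmain : d (K m u v) v < r (K m u v) u + 2 ^ (K m u v) + 2 ^ (K m u v) := by
    rcases eq_or_lt_of_le (K_le m u v) with he | hlt
    · have h0 : v / 2 ^ m = 0 := Nat.div_eq_of_lt hv
      have hd0 : d (K m u v) v = 0 := by rw [he, d, h0, Nat.mul_zero]
      have h2 : 0 < 2 ^ (K m u v) := Nat.pow_pos (by norm_num)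
      omega
    · have hp : 0 < 2 ^ (K m u v) := Nat.pow_pos (by norm_num)
      have hnot : ¬ (r (K m u v + 1) u ≤ d (K m u v + 1) v) := K_not hlt
      have h1 : r (K m u v + 1) u ≤ r (K m u v) u + 2 ^ (K m u v) := by
        rcases r_succ_cases (K m u v) u with h | h <;> omega
      have h2 : d (K m u v) v ≤ d (K m u v + 1) v + 2 ^ (K m u v) := by
        rcases d_succ_cases (K m u v) v with h | h <;> omega
      omega
  exact two_pow_diff hrd (dvd_r _ u) (dvd_d _ v) hmain

/-- level-`i` component of the dyadic decomposition of `a v - a u`. -/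
noncomputable def c (a : ℕ → ℂ) (m u v i : ℕ) : ℂ :=
  if i < K m u v then S a (r i u) (r (i+1) u) + S a (d (i+1) v) (d i v)
  else if i = K m u v then S a (r (K m u v) u) (d (K m u v) v)
  else 0

lemma asc_tele (a : ℕ → ℂ) (u : ℕ) (n : ℕ) :
    ∑ i ∈ Finset.range n, S a (r i u) (r (i+1) u) = S a u (r n u) := by
  induction n with
  | zero => simp [r_zero, S]
  | succ n ih =>
      rw [Finset.sum_range_succ, ih, S_glue a (le_r n u) (r_le_succ n u)]

lemma desc_tele (a : ℕ → ℂ) (v : ℕ) (n : ℕ) :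
    ∑ i ∈ Finset.range n, S a (d (i+1) v) (d i v) = S a (d n v) v := by
  induction n with
  | zero => simp [d_zero, S]
  | succ n ih =>
      rw [Finset.sum_range_succ]
      have h1 : d (n+1) v ≤ d n v := d_succ_le n v
      have h2 : d n v ≤ v := d_le n v
      calc ∑ i ∈ Finset.range n, S a (d (i+1) v) (d i v) + S a (d (n+1) v) (d n v)
          = S a (d n v) v + S a (d (n+1) v) (d n v) := by rw [ih]
        _ = S a (d (n+1) v) v := by rw [add_comm, S_glue a h1 h2]

lemma c_decomp (a : ℕ → ℂ) {m u v : ℕ} (huv : u ≤ v) :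
    ∑ i ∈ Finset.range (m + 1), c a m u v i = a v - a u := by
  set k := K m u v with hk
  have hkm : k ≤ m := K_le m u v
  have hrd : r k u ≤ d k v := K_spec huv
  have hur : u ≤ r k u := le_r k u
  have hdv : d k v ≤ v := d_le k v
  have hsplit : Finset.range (m+1) = Finset.range (k+1) ∪ Finset.Ico (k+1) (m+1) := by
    rw [Finset.range_eq_Ico, ← Finset.Ico_union_Ico_eq_Ico (by omega : 0 ≤ k+1) (by omega), Finset.range_eq_Ico]
  rw [hsplit, Finset.sum_union (Finset.disjoint_left.mpr (by
    intro x hx1 hx2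
    simp only [Finset.mem_range] at hx1
    simp only [Finset.mem_Ico] at hx2
    omega))]
  have htail : ∑ i ∈ Finset.Ico (k+1) (m+1), c a m u v i = 0 := by
    apply Finset.sum_eq_zero
    intro i hi
    simp only [Finset.mem_Ico] at hi
    rw [c, if_neg (by omega), if_neg (by omega)]
  rw [htail, add_zero, Finset.sum_range_succ]
  have hcK : c a m u v k = S a (r k u) (d k v) := by
    simp [c, ← hk]
  have hbody : ∑ i ∈ Finset.range k, c a m u v i
      = ∑ i ∈ Finset.range k, (S a (r i u) (r (i+1) u) + S a (d (i+1) v) (d i v)) := by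
    apply Finset.sum_congr rfl
    intro i hi
    simp only [Finset.mem_range] at hi
    rw [c, if_pos (by omega)]
  rw [hcK, hbody, Finset.sum_add_distrib, asc_tele, desc_tele]
  have e1 : S a u (r k u) + S a (r k u) (d k v) = S a u (d k v) := S_glue a hur hrd
  have e2 : S a u (d k v) + S a (d k v) v = S a u v := S_glue a (hur.trans hrd) hdv
  calc S a u (r k u) + S a (d k v) v + S a (r k u) (d k v)
      = S a u (r k u) + S a (r k u) (d k v) + S a (d k v) v := by ring
    _ = a v - a u := by rw [e1, e2, S_eq a (huv)]


lemma minkowski (n : ℕ) (s : Finset ℕ) (x : ℕ → ℕ → ℝ≥0∞) :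
    (∑ j ∈ s, (∑ i ∈ Finset.range n, x i j) ^ (2:ℝ)) ^ (1/2:ℝ)
      ≤ ∑ i ∈ Finset.range n, (∑ j ∈ s, (x i j) ^ (2:ℝ)) ^ (1/2:ℝ) := by
  induction n with
  | zero => simp [ENNReal.zero_rpow_of_pos]
  | succ n ih =>
      have h1 : (∑ j ∈ s, (∑ i ∈ Finset.range (n+1), x i j) ^ (2:ℝ)) ^ (1/2:ℝ)
          = (∑ j ∈ s, ((∑ i ∈ Finset.range n, x i j) + x n j) ^ (2:ℝ)) ^ (1/2:ℝ) := by
        congr 1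
        exact Finset.sum_congr rfl fun j _ => by rw [Finset.sum_range_succ]
      rw [h1, Finset.sum_range_succ]
      exact le_trans (ENNReal.Lp_add_le s _ _ (by norm_num)) (add_le_add_left ih _)

lemma sq_add_le (x y : ℂ) :
    (‖x + y‖₊ : ℝ≥0∞) ^ 2 ≤ 2 * ((‖x‖₊ : ℝ≥0∞) ^ 2 + (‖y‖₊ : ℝ≥0∞) ^ 2) := by
  have h : ‖x + y‖₊ ^ 2 ≤ 2 * (‖x‖₊ ^ 2 + ‖y‖₊ ^ 2) := by
    rw [← NNReal.coe_le_coe]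
    push_cast
    have h2 := norm_add_le x y
    have h0 := norm_nonneg x
    have h1 := norm_nonneg y
    have h3 := norm_nonneg (x + y)
    nlinarith [sq_nonneg (‖x‖ - ‖y‖)]
  calc (‖x + y‖₊ : ℝ≥0∞) ^ 2 = ((‖x + y‖₊ ^ 2 : ℝ≥0) : ℝ≥0∞) := by push_cast; ring
    _ ≤ ((2 * (‖x‖₊ ^ 2 + ‖y‖₊ ^ 2) : ℝ≥0) : ℝ≥0∞) := ENNReal.coe_le_coe.mpr h
    _ = 2 * ((‖x‖₊ : ℝ≥0∞) ^ 2 + (‖y‖₊ : ℝ≥0∞) ^ 2) := by push_cast; ring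

lemma pair_le_sum {g : ℕ → ℝ≥0∞} {T : Finset ℕ} {ρ₁ ρ₂ : ℕ} (h₁ : ρ₁ ∈ T) (h₂ : ρ₂ ∈ T)
    (hne : ρ₁ ≠ ρ₂) : g ρ₁ + g ρ₂ ≤ ∑ ρ ∈ T, g ρ := by
  rw [← Finset.sum_pair hne]
  exact Finset.sum_le_sum_of_subset (by
    intro ρ hρ
    simp only [Finset.mem_insert, Finset.mem_singleton] at hρ
    rcases hρ with rfl | rfl <;> assumption)


/-- the level-`i` weight at block `ρ` (the summand of the RHS). -/
noncomputable def g (a : ℕ → ℂ) (j₀ m i ρ : ℕ) : ℝ≥0∞ :=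
  if j₀ ≤ ρ * 2 ^ i ∧ (ρ + 1) * 2 ^ i ≤ 2 ^ m then
    (‖S a (ρ * 2 ^ i) ((ρ + 1) * 2 ^ i)‖₊ : ℝ≥0∞) ^ 2
  else 0

/-- the level-`i` blocks contained in `[u, v)`. -/
def T (i u v N : ℕ) : Finset ℕ :=
  (Finset.range N).filter fun ρ => u ≤ ρ * 2 ^ i ∧ (ρ + 1) * 2 ^ i ≤ v

lemma S_self (a : ℕ → ℂ) (x : ℕ) : S a x x = 0 := by simp [S]

lemma block_mem (a : ℕ → ℂ) {j₀ m i u v x : ℕ} (him : i ≤ m) (hu : j₀ ≤ u) (hv : v ≤ 2 ^ m)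
    (hdvd : 2 ^ i ∣ x) (h1 : u ≤ x) (h2 : x + 2 ^ i ≤ v) :
    x / 2 ^ i ∈ T i u v (2 ^ (m - i)) ∧
      g a j₀ m i (x / 2 ^ i) = (‖S a x (x + 2 ^ i)‖₊ : ℝ≥0∞) ^ 2 := by
  have h2pos : 0 < 2 ^ i := Nat.pow_pos (by norm_num)
  obtain ⟨q, hq⟩ := hdvd
  have hxq : x / 2 ^ i = q := by rw [hq, Nat.mul_div_cancel_left _ h2pos]
  have hx : x / 2 ^ i * 2 ^ i = x := by rw [hxq, hq, mul_comm]
  have hx1 : (x / 2 ^ i + 1) * 2 ^ i = x + 2 ^ i := by rw [add_mul, hx, one_mul]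
  have hpow : 2 ^ (m - i) * 2 ^ i = 2 ^ m := by
    rw [← pow_add]; congr 1; omega
  have hlt : x / 2 ^ i < 2 ^ (m - i) := by
    by_contra hcon
    have : 2 ^ (m - i) * 2 ^ i ≤ x / 2 ^ i * 2 ^ i := Nat.mul_le_mul_right _ (by omega)
    rw [hx, hpow] at this
    omega
  have hcond : j₀ ≤ x / 2 ^ i * 2 ^ i ∧ (x / 2 ^ i + 1) * 2 ^ i ≤ 2 ^ m := by
    rw [hx, hx1]; exact ⟨hu.trans h1, h2.trans hv⟩
  refine ⟨?_, ?_⟩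
  · rw [T, Finset.mem_filter, Finset.mem_range]
    exact ⟨hlt, by rw [hx, hx1]; exact ⟨h1, h2⟩⟩
  · rw [g, if_pos hcond, hx, hx1]

lemma interval_bound (a : ℕ → ℂ) {j₀ m : ℕ} (i : ℕ) {u v : ℕ} (hu : j₀ ≤ u) (huv : u ≤ v)
    (hv : v < 2 ^ m) (him : i ≤ m) :
    (‖c a m u v i‖₊ : ℝ≥0∞) ^ 2 ≤ 2 * ∑ ρ ∈ T i u v (2 ^ (m - i)), g a j₀ m i ρ := by
  have hvle : v ≤ 2 ^ m := hv.le
  have hrd : r (K m u v) u ≤ d (K m u v) v := K_spec huv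
  rcases lt_trichotomy i (K m u v) with hi | hi | hi
  · -- i < K : ascending + descending blocks
    rw [c, if_pos hi]
    refine le_trans (sq_add_le _ _) ?_
    rw [ENNReal.mul_le_mul_iff_right (by norm_num) (by norm_num)]
    have hri : r (i+1) u ≤ r (K m u v) u := r_mono u hi
    have hdK : d (K m u v) v ≤ d (i+1) v := d_anti v hi
    have hchain : r (i+1) u ≤ d (i+1) v := hri.trans (hrd.trans hdK)
    have hud : u ≤ d (i+1) v := ((le_r _ u).trans hrd).trans hdK
    have hdvdD : 2 ^ i ∣ d (i+1) v := (pow_dvd_pow 2 (Nat.le_succ i)).trans (dvd_d (i+1) v)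
    have h2pos : 0 < 2 ^ i := Nat.pow_pos (by norm_num)
    rcases r_succ_cases i u with hA | hA <;> rcases d_succ_cases i v with hB | hB
    · simp [hA, ← hB, S_self]
    · -- only descending block
      obtain ⟨hmem, hg⟩ := block_mem a (x := d (i+1) v) him hu hvle hdvdD hud
        (by rw [hB]; exact d_le i v)
      rw [hA, S_self, ← hB, ← hg]
      simpa using Finset.single_le_sum (f := g a j₀ m i) (fun _ _ => zero_le) hmem
    · -- only ascending block
      obtain ⟨hmem, hg⟩ := block_mem a (x := r i u) him hu hvle (dvd_r i u) (le_r i u)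
        (by rw [← hA]; exact hchain.trans (d_le (i+1) v))
      rw [← hB, S_self, hA, ← hg]
      simpa using Finset.single_le_sum (f := g a j₀ m i) (fun _ _ => zero_le) hmem
    · -- both blocks
      have hlt2 : r i u + 2 ^ i ≤ d (i+1) v := by rw [← hA]; exact hchain
      obtain ⟨hmem1, hg1⟩ := block_mem a (x := r i u) him hu hvle (dvd_r i u) (le_r i u)
        (hlt2.trans ((d_anti v (Nat.le_succ i)).trans_eq rfl |>.trans (d_le i v)))
      obtain ⟨hmem2, hg2⟩ := block_mem a (x := d (i+1) v) him hu hvle hdvdD hud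
        (by rw [hB]; exact d_le i v)
      have hne : r i u / 2 ^ i ≠ d (i+1) v / 2 ^ i := by
        intro heq
        have e1 : r i u / 2 ^ i * 2 ^ i = r i u := Nat.div_mul_cancel (dvd_r i u)
        have e2 : d (i+1) v / 2 ^ i * 2 ^ i = d (i+1) v := Nat.div_mul_cancel hdvdD
        rw [heq, e2] at e1
        omega
      rw [hA, ← hB, ← hg1, ← hg2]
      exact pair_le_sum hmem1 hmem2 hne
  · -- i = K : middle block
    have hKm : K m u v ≤ m := K_le m u v
    rw [hi, c, if_neg (lt_irrefl _), if_pos rfl]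
    rcases mid_cases huv hv with he | he
    · rw [he, S_self]
      simp
    · obtain ⟨hmem, hg⟩ := block_mem a (x := r (K m u v) u) hKm hu hvle (dvd_r _ u)
        (le_r _ u) (by rw [← he]; exact d_le _ v)
      rw [he, ← hg]
      calc g a j₀ m (K m u v) (r (K m u v) u / 2 ^ K m u v)
            ≤ ∑ ρ ∈ T (K m u v) u v (2 ^ (m - K m u v)), g a j₀ m (K m u v) ρ :=
            Finset.single_le_sum (fun _ _ => zero_le) hmem
        _ ≤ 2 * _ := le_mul_of_one_le_left zero_le one_le_two
  · -- i > K : zero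
    rw [c, if_neg (by omega), if_neg (by omega)]
    simp


lemma rpow_two_eq (x : ℝ≥0∞) : x ^ (2:ℝ) = x ^ 2 := by
  rw [show (2:ℝ) = ((2:ℕ):ℝ) by norm_num, ENNReal.rpow_natCast]

lemma minkowski' (n : ℕ) (s : Finset ℕ) (x : ℕ → ℕ → ℝ≥0∞) :
    (∑ j ∈ s, (∑ i ∈ Finset.range n, x i j) ^ 2) ^ (1/2:ℝ)
      ≤ ∑ i ∈ Finset.range n, (∑ j ∈ s, (x i j) ^ 2) ^ (1/2:ℝ) := by
  simpa only [rpow_two_eq] using minkowski n s x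

lemma sqrt_two_eq : ENNReal.ofReal (Real.sqrt 2) = (2:ℝ≥0∞) ^ (1/2:ℝ) := by
  rw [Real.sqrt_eq_rpow, ← ENNReal.ofReal_rpow_of_pos (by norm_num : (0:ℝ) < 2)]
  norm_num

lemma level_bound (a : ℕ → ℂ) {j₀ m J : ℕ} (t : ℕ → ℕ)
    (ht1 : ∀ p ≤ J, j₀ ≤ t p ∧ t p < 2 ^ m) (ht2 : ∀ p < J, t p < t (p + 1))
    {i : ℕ} (him : i ≤ m) :
    ∑ j ∈ Finset.range J, (‖c a m (t j) (t (j+1)) i‖₊ : ℝ≥0∞) ^ 2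
      ≤ 2 * ∑ ρ ∈ Finset.range (2 ^ (m - i)), g a j₀ m i ρ := by
  have h2pos : 0 < 2 ^ i := Nat.pow_pos (by norm_num)
  have tmono : ∀ p q, p ≤ q → q ≤ J → t p ≤ t q := by
    intro p q hpq
    induction hpq with
    | refl => exact fun _ => le_rfl
    | @step n hn ih =>
        intro hnJ
        exact (ih (by omega)).trans (ht2 n (by omega)).le
  have key : ∀ p q, p < q → q < J →
      Disjoint (T i (t p) (t (p+1)) (2 ^ (m - i))) (T i (t q) (t (q+1)) (2 ^ (m - i))) := by
    intro p q hpq hqJ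
    refine Finset.disjoint_left.mpr ?_
    intro ρ h1 h2
    rw [T, Finset.mem_filter] at h1 h2
    have ha : (ρ + 1) * 2 ^ i ≤ t (p + 1) := h1.2.2
    have hb : t q ≤ ρ * 2 ^ i := h2.2.1
    have hc : t (p + 1) ≤ t q := tmono _ _ (by omega) (by omega)
    have hd : (ρ + 1) * 2 ^ i = ρ * 2 ^ i + 2 ^ i := by ring
    omega
  have hdisj : Set.PairwiseDisjoint ↑(Finset.range J)
      (fun j => T i (t j) (t (j+1)) (2 ^ (m - i))) := by
    intro p hp q hq hpq
    simp only [Finset.coe_range, Set.mem_Iio] at hp hq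
    rcases hpq.lt_or_gt with h | h
    · exact key p q h hq
    · exact (key q p h hp).symm
  calc ∑ j ∈ Finset.range J, (‖c a m (t j) (t (j+1)) i‖₊ : ℝ≥0∞) ^ 2
      ≤ ∑ j ∈ Finset.range J, 2 * ∑ ρ ∈ T i (t j) (t (j+1)) (2 ^ (m - i)), g a j₀ m i ρ := by
        refine Finset.sum_le_sum ?_
        intro j hj
        simp only [Finset.mem_range] at hj
        exact interval_bound a i (ht1 j (by omega)).1 (ht2 j hj).le
          (ht1 (j+1) (by omega)).2 him
    _ = 2 * ∑ j ∈ Finset.range J, ∑ ρ ∈ T i (t j) (t (j+1)) (2 ^ (m - i)), g a j₀ m i ρ := by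
        rw [Finset.mul_sum]
    _ = 2 * ∑ ρ ∈ (Finset.range J).biUnion (fun j => T i (t j) (t (j+1)) (2 ^ (m - i))),
          g a j₀ m i ρ := by
        rw [Finset.sum_biUnion hdisj]
    _ ≤ 2 * ∑ ρ ∈ Finset.range (2 ^ (m - i)), g a j₀ m i ρ := by
        refine mul_le_mul_right (Finset.sum_le_sum_of_subset ?_) 2
        intro ρ hρ
        simp only [Finset.mem_biUnion] at hρ
        obtain ⟨j, _, hj⟩ := hρ
        rw [T, Finset.mem_filter] at hj
        exact hj.1

end RM4

/-- 2-variation seminorm of `(𝔞_j : lo ≤ j < hi)`: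
the supremum over all finite increasing sequences `lo ≤ t₀ < ⋯ < t_J < hi`
of `(∑_{j<J} |𝔞_{t_{j+1}} − 𝔞_{t_j}|²)^{1/2}`. -/
noncomputable def var2 (a : ℕ → ℂ) (lo hi : ℕ) : ℝ≥0∞ :=
  ⨆ (J : ℕ) (t : ℕ → ℕ)
      (_ : (∀ i ≤ J, lo ≤ t i ∧ t i < hi) ∧ ∀ i < J, t i < t (i + 1)),
    (∑ j ∈ Finset.range J, (‖a (t (j + 1)) - a (t j)‖₊ : ℝ≥0∞) ^ 2) ^ (1 / 2 : ℝ)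

/-- Rademacher–Menshov inequality for the 2-variation: for `j₀ < 2^m`,
`V²(𝔞_j : j₀ ≤ j < 2^m) ≤ √2 ∑_{i=0}^m (∑_{j<2^{m−i}} |∑_{k ∈ U_j^i ⊆ [j₀,2^m)} (𝔞_{k+1}−𝔞_k)|²)^{1/2}`,
where `U_j^i = [j2^i, (j+1)2^i)` and the inner sum is taken only when
`U_j^i ⊆ [j₀, 2^m)`. -/
theorem stmt_4 (j₀ m : ℕ) (h : j₀ < 2 ^ m) (a : ℕ → ℂ) :
    var2 a j₀ (2 ^ m) ≤
      ENNReal.ofReal (Real.sqrt 2) *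
        ∑ i ∈ Finset.range (m + 1),
          (∑ j ∈ Finset.range (2 ^ (m - i)),
              (if j₀ ≤ j * 2 ^ i ∧ (j + 1) * 2 ^ i ≤ 2 ^ m then
                (‖∑ k ∈ Finset.Ico (j * 2 ^ i) ((j + 1) * 2 ^ i),
                    (a (k + 1) - a k)‖₊ : ℝ≥0∞) ^ 2
              else 0)) ^ (1 / 2 : ℝ) := by
  have hRHS : ∀ i : ℕ, (∑ j ∈ Finset.range (2 ^ (m - i)),
      (if j₀ ≤ j * 2 ^ i ∧ (j + 1) * 2 ^ i ≤ 2 ^ m then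
        (‖∑ k ∈ Finset.Ico (j * 2 ^ i) ((j + 1) * 2 ^ i), (a (k + 1) - a k)‖₊ : ℝ≥0∞) ^ 2
      else 0)) = ∑ ρ ∈ Finset.range (2 ^ (m - i)), RM4.g a j₀ m i ρ := by
    intro i
    exact Finset.sum_congr rfl fun ρ _ => by rw [RM4.g, RM4.S]
  rw [var2]
  refine iSup_le fun J => iSup_le fun t => iSup_le fun ht => ?_
  obtain ⟨ht1, ht2⟩ := ht
  calc (∑ j ∈ Finset.range J, (‖a (t (j + 1)) - a (t j)‖₊ : ℝ≥0∞) ^ 2) ^ (1 / 2 : ℝ)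
      ≤ (∑ j ∈ Finset.range J,
          (∑ i ∈ Finset.range (m + 1),
            (‖RM4.c a m (t j) (t (j + 1)) i‖₊ : ℝ≥0∞)) ^ 2) ^ (1 / 2 : ℝ) := by
        refine ENNReal.rpow_le_rpow (Finset.sum_le_sum fun j hj => ?_) (by norm_num)
        simp only [Finset.mem_range] at hj
        have hdec : a (t (j + 1)) - a (t j)
            = ∑ i ∈ Finset.range (m + 1), RM4.c a m (t j) (t (j + 1)) i :=
          (RM4.c_decomp a (ht2 j hj).le).symm
        rw [hdec]
        refine pow_le_pow_left₀ zero_le ?_ 2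
        calc (‖∑ i ∈ Finset.range (m + 1), RM4.c a m (t j) (t (j + 1)) i‖₊ : ℝ≥0∞)
            ≤ ((∑ i ∈ Finset.range (m + 1), ‖RM4.c a m (t j) (t (j + 1)) i‖₊ : ℝ≥0) : ℝ≥0∞) :=
              ENNReal.coe_le_coe.mpr (nnnorm_sum_le _ _)
          _ = ∑ i ∈ Finset.range (m + 1), (‖RM4.c a m (t j) (t (j + 1)) i‖₊ : ℝ≥0∞) := by
              push_cast; rfl
    _ ≤ ∑ i ∈ Finset.range (m + 1),
          (∑ j ∈ Finset.range J, (‖RM4.c a m (t j) (t (j + 1)) i‖₊ : ℝ≥0∞) ^ 2) ^ (1 / 2 : ℝ) :=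
        RM4.minkowski' (m + 1) (Finset.range J) _
    _ ≤ ∑ i ∈ Finset.range (m + 1),
          (2 * ∑ ρ ∈ Finset.range (2 ^ (m - i)), RM4.g a j₀ m i ρ) ^ (1 / 2 : ℝ) := by
        refine Finset.sum_le_sum fun i hi => ?_
        simp only [Finset.mem_range] at hi
        exact ENNReal.rpow_le_rpow
          (RM4.level_bound a t ht1 ht2 (by omega)) (by norm_num)
    _ = ∑ i ∈ Finset.range (m + 1),
          (2:ℝ≥0∞) ^ (1/2:ℝ) *
            (∑ ρ ∈ Finset.range (2 ^ (m - i)), RM4.g a j₀ m i ρ) ^ (1 / 2 : ℝ) := by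
        refine Finset.sum_congr rfl fun i _ => ?_
        rw [ENNReal.mul_rpow_of_nonneg _ _ (by norm_num)]
    _ = ENNReal.ofReal (Real.sqrt 2) *
          ∑ i ∈ Finset.range (m + 1),
            (∑ ρ ∈ Finset.range (2 ^ (m - i)), RM4.g a j₀ m i ρ) ^ (1 / 2 : ℝ) := by
        rw [← Finset.mul_sum, RM4.sqrt_two_eq]
    _ = _ := by
        congr 1
end

section
/- For each j ∈ [r] there exists σ_j > 0 such that for every v ∈ S_P \ {v_j} and every (a,b) ∈ S₁^N(j) one has (a,b)·(v − v_j) ≤ −σ_j N. -/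
/-- For each vertex `v j` of the backwards Newton diagram there is `σ_j > 0` such that
for every `v' ∈ S \ {v j}` and every `(a,b) ∈ S₁^N(j)`, i.e.
`(a,b) = ((n+N)/d_j) ω_{j−1} + (N/d_j) ω_j` with `n, N ∈ ℕ`, one has
`(a,b)·(v' − v_j) ≤ −σ_j N`. Here `d_j = −det[ω_{j−1} | ω_j] > 0` and the convexity
inequalities `ω_{j−1}·(v'−v_j) ≤ 0`, `ω_j·(v'−v_j) ≤ 0` hold with at least one strict. -/
theorem stmt_8 (r : ℕ) (S : Finset (ℝ × ℝ)) (v : ℕ → ℝ × ℝ) (ω : ℕ → ℝ × ℝ)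
    (j : ℕ) (hj1 : 1 ≤ j) (hjr : j ≤ r)
    (d : ℝ) (hd : d = -((ω (j - 1)).1 * (ω j).2 - (ω j).1 * (ω (j - 1)).2))
    (hd0 : 0 < d)
    (hconv : ∀ v' ∈ S, v' ≠ v j →
      ((ω j).1 * (v'.1 - (v j).1) + (ω j).2 * (v'.2 - (v j).2) ≤ 0 ∧
       (ω (j - 1)).1 * (v'.1 - (v j).1) + (ω (j - 1)).2 * (v'.2 - (v j).2) ≤ 0 ∧
       ((ω j).1 * (v'.1 - (v j).1) + (ω j).2 * (v'.2 - (v j).2) < 0 ∨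
        (ω (j - 1)).1 * (v'.1 - (v j).1) + (ω (j - 1)).2 * (v'.2 - (v j).2) < 0))) :
    ∃ σ : ℝ, 0 < σ ∧
      ∀ v' ∈ S, v' ≠ v j → ∀ N n : ℕ, ∀ a b : ℝ,
        (a, b) = (((n : ℝ) + (N : ℝ)) / d) • ω (j - 1) + ((N : ℝ) / d) • ω j →
        a * (v'.1 - (v j).1) + b * (v'.2 - (v j).2) ≤ -σ * (N : ℝ) := by
  classical
  set g : ℝ × ℝ → ℝ := fun v' =>
    -(((ω j).1 * (v'.1 - (v j).1) + (ω j).2 * (v'.2 - (v j).2)) +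
      ((ω (j - 1)).1 * (v'.1 - (v j).1) + (ω (j - 1)).2 * (v'.2 - (v j).2))) / d with hg
  set T : Finset (ℝ × ℝ) := S.filter (fun v' => v' ≠ v j) with hT
  have hgpos : ∀ v' ∈ T, 0 < g v' := by
    intro v' hv'
    rw [hT, Finset.mem_filter] at hv'
    obtain ⟨h1, h2, h3⟩ := hconv v' hv'.1 hv'.2
    apply div_pos _ hd0
    rcases h3 with h | h <;> linarith
  by_cases hTe : T.Nonempty
  · refine ⟨T.inf' hTe g, ?_, ?_⟩
    · exact (Finset.lt_inf'_iff hTe).2 (fun b hb => hgpos b hb)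
    · intro v' hvS hvne N n a b hab
      have hvT : v' ∈ T := Finset.mem_filter.2 ⟨hvS, hvne⟩
      have hginf : T.inf' hTe g ≤ g v' := Finset.inf'_le g hvT
      obtain ⟨h1, h2, _⟩ := hconv v' hvS hvne
      have ha : a = (((n : ℝ) + N) / d) * (ω (j - 1)).1 + ((N : ℝ) / d) * (ω j).1 := by
        have := congrArg Prod.fst hab; simpa using this
      have hb : b = (((n : ℝ) + N) / d) * (ω (j - 1)).2 + ((N : ℝ) / d) * (ω j).2 := by
        have := congrArg Prod.snd hab; simpa using this
      have hn0 : (0:ℝ) ≤ (n:ℝ) / d := div_nonneg (Nat.cast_nonneg n) hd0.le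
      have hN0 : (0:ℝ) ≤ (N:ℝ) / d := div_nonneg (Nat.cast_nonneg N) hd0.le
      have key : a * (v'.1 - (v j).1) + b * (v'.2 - (v j).2) =
          ((n : ℝ) / d) * ((ω (j - 1)).1 * (v'.1 - (v j).1) + (ω (j - 1)).2 * (v'.2 - (v j).2))
          - ((N : ℝ)) * g v' := by
        rw [ha, hb, hg]
        field_simp
        ring
      rw [key]
      have t1 : ((n : ℝ) / d) * ((ω (j - 1)).1 * (v'.1 - (v j).1) + (ω (j - 1)).2 * (v'.2 - (v j).2)) ≤ 0 :=
        mul_nonpos_of_nonneg_of_nonpos hn0 h2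
      have t2 : (N : ℝ) * T.inf' hTe g ≤ (N : ℝ) * g v' :=
        mul_le_mul_of_nonneg_left hginf (Nat.cast_nonneg N)
      nlinarith
  · exact ⟨1, one_pos, fun v' hvS hvne => absurd (Finset.mem_filter.2 ⟨hvS, hvne⟩)
      (fun h => hTe ⟨v', h⟩)⟩
end

section
/- (Technical lemma for Weyl sums) Let α ∈ ℝ and suppose there are a, q ∈ ℕ and θ ∈ ℝ with 0 ≤ a < q, (a,q) = 1, |θ| ≤ 1, and α = a/q + θ/q². Then for every β > 0, U > 0 and real P ≥ 1, Σ_{n=1}^{P} min{U, 1/‖αn + β‖} ≤ 6(1 + P/q)(U + q log q). -/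
set_option maxHeartbeats 1000000

open Finset


lemma harm (n : ℕ) : ∑ i ∈ Finset.range n, ((i:ℝ)+1)⁻¹ ≤ 1 + Real.log n := by
  have h := harmonic_le_one_add_log n
  have he : (harmonic n : ℝ) = ∑ i ∈ Finset.range n, ((i:ℝ)+1)⁻¹ := by
    unfold harmonic; push_cast; exact Finset.sum_congr rfl fun i _ => by ring_nf
  linarith [he ▸ h]

lemma Fsum (q : ℕ) (hq : 7 ≤ q) (U : ℝ) (hU : 0 < U) :
    ∑ k ∈ Finset.range q,
      (if min k (q-1-k) ≤ 1 then U else (q:ℝ)/(((min k (q-1-k) : ℕ):ℝ) - 1))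
      ≤ 6*(U + (q:ℝ)*Real.log q) := by
  have hq0 : (0:ℝ) < q := by
    have : 0 < q := by omega
    exact_mod_cast this
  have hq7 : (7:ℝ) ≤ q := by exact_mod_cast hq
  set G : ℕ → ℝ := fun k => if k ≤ 1 then U else (q:ℝ)/((k:ℝ)-1) with hG
  have hGnn : ∀ k, 0 ≤ G k := by
    intro k; rw [hG]; dsimp only
    split
    · exact hU.le
    · rename_i h
      have : (2:ℝ) ≤ k := by exact_mod_cast (by omega : 2 ≤ k)
      exact div_nonneg hq0.le (by linarith)
  have hFG : ∀ k, (if min k (q-1-k) ≤ 1 then U else (q:ℝ)/(((min k (q-1-k) : ℕ):ℝ) - 1))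
      ≤ G k + G (q-1-k) := by
    intro k
    by_cases h1 : min k (q-1-k) ≤ 1
    · rw [if_pos h1]
      rcases (by omega : k ≤ 1 ∨ q-1-k ≤ 1) with h | h
      · have : G k = U := by rw [hG]; simp [h]
        linarith [hGnn (q-1-k)]
      · have : G (q-1-k) = U := by rw [hG]; simp [h]
        linarith [hGnn k]
    · rw [if_neg h1]
      have h2 : 2 ≤ min k (q-1-k) := by omega
      rcases min_choice k (q-1-k) with h | h <;> rw [h]
      · have hk2 : ¬ k ≤ 1 := by omega
        have : G k = (q:ℝ)/((k:ℝ)-1) := by rw [hG]; simp [hk2]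
        rw [← this]; linarith [hGnn (q-1-k)]
      · have hk2 : ¬ q-1-k ≤ 1 := by omega
        have : G (q-1-k) = (q:ℝ)/(((q-1-k:ℕ):ℝ)-1) := by rw [hG]; simp [hk2]
        rw [← this]; linarith [hGnn k]
  have hrefl : ∑ k ∈ Finset.range q, G (q-1-k) = ∑ k ∈ Finset.range q, G k :=
    Finset.sum_range_reflect G q
  have hGsum : ∑ k ∈ Finset.range q, G k ≤ 2*U + (q:ℝ)*(1 + Real.log q) := by
    have hsplit : ∑ k ∈ Finset.range q, G k
        = ∑ k ∈ Finset.range 2, G k + ∑ k ∈ Finset.Ico 2 q, G k := by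
      exact (Finset.sum_range_add_sum_Ico G (by omega : 2 ≤ q)).symm
    have h2 : ∑ k ∈ Finset.range 2, G k = 2*U := by
      rw [Finset.sum_range_succ, Finset.sum_range_one, hG]; norm_num; ring
    have h3 : ∑ k ∈ Finset.Ico 2 q, G k = ∑ i ∈ Finset.range (q-2), (q:ℝ) * ((i:ℝ)+1)⁻¹ := by
      rw [Finset.sum_Ico_eq_sum_range]
      refine Finset.sum_congr rfl fun i _ => ?_
      rw [hG]; dsimp only
      rw [if_neg (by omega)]
      push_cast
      rw [div_eq_mul_inv]
      ring_nf
    have h4 : ∑ i ∈ Finset.range (q-2), (q:ℝ) * ((i:ℝ)+1)⁻¹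
        ≤ (q:ℝ) * (1 + Real.log q) := by
      rw [← Finset.mul_sum]
      refine mul_le_mul_of_nonneg_left ?_ hq0.le
      refine (harm (q-2)).trans ?_
      have : Real.log ((q-2:ℕ):ℝ) ≤ Real.log q := by
        apply Real.log_le_log (by exact_mod_cast (by omega : 0 < q - 2))
        exact_mod_cast (by omega : q - 2 ≤ q)
      linarith
    linarith
  have hlog1 : (1:ℝ) ≤ Real.log q := by
    rw [Real.le_log_iff_exp_le hq0]
    exact (Real.exp_one_lt_d9.le).trans (by norm_num; linarith)
  calc ∑ k ∈ Finset.range q,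
      (if min k (q-1-k) ≤ 1 then U else (q:ℝ)/(((min k (q-1-k) : ℕ):ℝ) - 1))
      ≤ ∑ k ∈ Finset.range q, (G k + G (q-1-k)) := Finset.sum_le_sum fun k _ => hFG k
    _ = ∑ k ∈ Finset.range q, G k + ∑ k ∈ Finset.range q, G (q-1-k) := Finset.sum_add_distrib
    _ = 2 * (∑ k ∈ Finset.range q, G k) := by rw [hrefl]; ring
    _ ≤ 2 * (2*U + (q:ℝ)*(1 + Real.log q)) := by linarith
    _ ≤ 6*(U + (q:ℝ)*Real.log q) := by nlinarith

lemma auxA (x y : ℝ) : |y - round y| ≤ |x - y| + |x - round x| := by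
  calc |y - round y| ≤ |y - (round x : ℝ)| := round_le y (round x)
    _ = |(y - x) + (x - round x)| := by ring_nf
    _ ≤ |y - x| + |x - round x| := abs_add_le _ _
    _ = |x - y| + |x - round x| := by rw [abs_sub_comm]

lemma auxB (x : ℝ) (t : ℤ) : |x + t - round (x + t)| = |x - round x| := by
  rw [round_add_intCast]; push_cast; ring_nf

lemma auxC (y : ℝ) (h0 : 0 ≤ y) (h1 : y < 1) : |y - round y| = min y (1 - y) := by
  rw [abs_sub_round_eq_min, Int.fract_eq_self.mpr ⟨h0, h1⟩]

lemma keyblock (a q : ℕ) (θ : ℝ) (ha : a < q) (hq7 : 7 ≤ q) (hgcd : Nat.gcd a q = 1)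
    (hθ : |θ| ≤ 1) (α β U : ℝ) (hα : α = (a:ℝ)/(q:ℝ) + θ/(q:ℝ)^2) (hU : 0 < U)
    (j : ℕ) (f : ℕ → ℝ)
    (hf : ∀ n : ℕ, f n = if |α * (n:ℝ) + β - (round (α * (n:ℝ) + β) : ℝ)| = 0 then U
      else min U (|α * (n:ℝ) + β - (round (α * (n:ℝ) + β) : ℝ)|)⁻¹) :
    ∑ m ∈ Finset.range q, f (j*q + m + 1) ≤ 6*(U + (q:ℝ)*Real.log q) := by
  have hq0 : 0 < q := by omega
  have hqR : (0:ℝ) < q := by exact_mod_cast hq0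
  set c : ℝ := (a:ℝ)*((j*q+1 : ℕ):ℝ)/q + θ*((j*q+1 : ℕ):ℝ)/(q:ℝ)^2 + β with hc
  set s : ℤ := ⌊(q:ℝ)*c⌋ with hs
  set fr : ℝ := Int.fract ((q:ℝ)*c) with hfrdef
  have hsf : (s:ℝ) + fr = (q:ℝ)*c := by
    rw [hs, hfrdef]; exact Int.floor_add_fract _
  have hfr0 : 0 ≤ fr := Int.fract_nonneg _
  have hfr1 : fr < 1 := Int.fract_lt_one _
  set k : ℕ → ℕ := fun m => (((a*m : ℕ) + s) % (q:ℤ)).toNat with hk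
  have hklt : ∀ m, k m < q := by
    intro m
    rw [hk]
    have h2 : ((a*m : ℕ) + s) % (q:ℤ) < (q:ℤ) :=
      Int.emod_lt_of_pos _ (by exact_mod_cast hq0)
    exact (Int.toNat_lt' (by omega)).mpr h2
  clear_value c s fr k
  -- the key metric estimate
  have key : ∀ m, m < q →
      (((min (k m) (q-1-k m) : ℕ):ℝ) - 1)/(q:ℝ)
        ≤ |α * ((j*q+m+1 : ℕ):ℝ) + β - (round (α * ((j*q+m+1 : ℕ):ℝ) + β) : ℝ)| := by
    intro m hm
    set x : ℝ := α * ((j*q+m+1 : ℕ):ℝ) + β with hxdef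
    set y : ℝ := (((a*m : ℕ):ℝ) + (s:ℝ) + fr)/(q:ℝ) with hydef
    have hsf' : (s:ℝ) = (q:ℝ)*c - fr := by linarith
    have hx : x = y + θ*(m:ℝ)/(q:ℝ)^2 := by
      rw [hxdef, hydef, hsf', hc, hα]
      push_cast
      field_simp
      ring
    have hxy : |x - y| ≤ 1/(q:ℝ) := by
      have h1 : x - y = θ*(m:ℝ)/(q:ℝ)^2 := by rw [hx]; ring
      rw [h1, abs_div, abs_mul]
      have hmq : (m:ℝ) ≤ q := by exact_mod_cast hm.le
      have h2 : |(m:ℝ)| = (m:ℝ) := abs_of_nonneg (by positivity)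
      have h3 : |(q:ℝ)^2| = (q:ℝ)^2 := abs_of_nonneg (by positivity)
      rw [h2, h3, div_le_div_iff₀ (by positivity) hqR]
      have e1 : |θ| * ((m:ℝ) * (q:ℝ)) ≤ 1 * ((m:ℝ) * (q:ℝ)) :=
        mul_le_mul_of_nonneg_right hθ (by positivity)
      have e2 : (m:ℝ) * (q:ℝ) ≤ (q:ℝ) * (q:ℝ) := mul_le_mul_of_nonneg_right hmq hqR.le
      nlinarith
    have h1 : |y - round y| ≤ 1/(q:ℝ) + |x - round x| := le_trans (auxA x y) (by linarith)
    -- shift to (k m + fr)/q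
    have hkm : ((k m : ℕ):ℝ) = ((((a*m : ℕ) + s) % (q:ℤ) : ℤ):ℝ) := by
      rw [hk]
      norm_cast
      exact Int.toNat_of_nonneg (Int.emod_nonneg _ (by exact_mod_cast hq0.ne'))
    have h2 : y = ((k m : ℝ) + fr)/(q:ℝ) + (((a*m : ℕ) + s) / (q:ℤ) : ℤ) := by
      have hdm : (q:ℤ) * (((a*m : ℕ) + s) / (q:ℤ)) + ((a*m : ℕ) + s) % (q:ℤ)
          = (a*m : ℕ) + s := Int.mul_ediv_add_emod _ _
      have hdmR : (q:ℝ) * ((((a*m : ℕ) + s) / (q:ℤ) : ℤ):ℝ) + ((k m : ℕ):ℝ)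
          = ((a*m : ℕ):ℝ) + (s:ℝ) := by
        rw [hkm]
        exact_mod_cast congrArg (fun z : ℤ => (z:ℝ)) hdm
      push_cast at hdmR
      rw [hydef]
      field_simp
      push_cast
      linarith
    have h3 : |y - round y|
        = |((k m : ℝ) + fr)/(q:ℝ) - round (((k m : ℝ) + fr)/(q:ℝ))| := by
      rw [h2]; exact auxB _ _
    set z : ℝ := ((k m : ℝ) + fr)/(q:ℝ) with hz
    clear_value x y z
    have hz0 : 0 ≤ z := by rw [hz]; positivity
    have hz1 : z < 1 := by
      rw [hz, div_lt_one hqR]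
      have : ((k m : ℕ):ℝ) ≤ (q:ℝ) - 1 := by
        have := hklt m
        have : ((k m : ℕ):ℝ) + 1 ≤ (q:ℝ) := by exact_mod_cast this
        linarith
      linarith
    have h4 : |z - round z| = min z (1 - z) := auxC z hz0 hz1
    have h5 : (((min (k m) (q-1-k m) : ℕ):ℝ))/(q:ℝ) ≤ min z (1 - z) := by
      have hkq : k m ≤ q - 1 := by have := hklt m; omega
      have hc1 : ((min (k m) (q-1-k m) : ℕ):ℝ) ≤ (k m : ℝ) := by
        exact_mod_cast Nat.cast_le.mpr (min_le_left _ _)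
      have hc2 : ((min (k m) (q-1-k m) : ℕ):ℝ) ≤ (q:ℝ) - 1 - (k m : ℝ) := by
        have h := min_le_right (k m) (q-1-k m)
        have : ((min (k m) (q-1-k m) : ℕ):ℝ) ≤ ((q-1-k m : ℕ):ℝ) := by exact_mod_cast h
        have he : ((q-1-k m : ℕ):ℝ) = (q:ℝ) - 1 - (k m : ℝ) := by
          have h7 : k m ≤ q - 1 := hkq
          push_cast [Nat.cast_sub (by omega : 1 ≤ q), Nat.cast_sub h7]
          ring
        linarith
      refine le_min ?_ ?_
      · rw [hz, div_le_div_iff₀ hqR hqR]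
        nlinarith [mul_le_mul_of_nonneg_right hc1 hqR.le, mul_nonneg hfr0 hqR.le]
      · rw [le_sub_iff_add_le, hz, ← add_div, div_le_one hqR]
        linarith
    have h6 : (((min (k m) (q-1-k m) : ℕ):ℝ))/(q:ℝ) ≤ |y - (round y : ℤ)| := by
      rw [h3, h4]; exact h5
    have h7 : (((min (k m) (q-1-k m) : ℕ):ℝ))/(q:ℝ) ≤ 1/(q:ℝ) + |x - (round x : ℤ)| :=
      le_trans h6 h1
    rw [sub_div]
    linarith
  set F : ℕ → ℝ := fun t => if min t (q-1-t) ≤ 1 then U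
      else (q:ℝ)/(((min t (q-1-t) : ℕ):ℝ) - 1) with hF
  have hfF : ∀ m, m < q → f (j*q+m+1) ≤ F (k m) := by
    intro m hm
    rw [hf (j*q+m+1), hF]
    dsimp only
    by_cases hw : min (k m) (q-1-k m) ≤ 1
    · rw [if_pos hw]
      split
      · exact le_refl U
      · exact min_le_left _ _
    · rw [if_neg hw]
      have hW2 : (2:ℝ) ≤ ((min (k m) (q-1-k m) : ℕ):ℝ) := by
        exact_mod_cast (by omega : 2 ≤ min (k m) (q-1-k m))
      have hpos : 0 < (((min (k m) (q-1-k m) : ℕ):ℝ) - 1)/(q:ℝ) :=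
        div_pos (by linarith) hqR
      have hkey := key m hm
      have hgpos : 0 < |α * ((j*q+m+1 : ℕ):ℝ) + β - (round (α * ((j*q+m+1 : ℕ):ℝ) + β) : ℝ)| :=
        lt_of_lt_of_le hpos hkey
      rw [if_neg (ne_of_gt hgpos)]
      refine le_trans (min_le_right _ _) ?_
      calc |α * ((j*q+m+1 : ℕ):ℝ) + β - (round (α * ((j*q+m+1 : ℕ):ℝ) + β) : ℝ)|⁻¹
          ≤ ((((min (k m) (q-1-k m) : ℕ):ℝ) - 1)/(q:ℝ))⁻¹ := inv_anti₀ hpos hkey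
        _ = (q:ℝ)/(((min (k m) (q-1-k m) : ℕ):ℝ) - 1) := inv_div _ _
  have hinj : Set.InjOn k ↑(Finset.range q) := by
    intro m1 hm1 m2 hm2 hkk
    simp only [Finset.coe_range, Set.mem_Iio] at hm1 hm2
    have hqz : (q:ℤ) ≠ 0 := by exact_mod_cast hq0.ne'
    have n1 : 0 ≤ ((a*m1 : ℕ) + s) % (q:ℤ) := Int.emod_nonneg _ hqz
    have n2 : 0 ≤ ((a*m2 : ℕ) + s) % (q:ℤ) := Int.emod_nonneg _ hqz
    rw [hk] at hkk
    dsimp only at hkk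
    have e1 : ((a*m1 : ℕ) + s) % (q:ℤ) = ((a*m2 : ℕ) + s) % (q:ℤ) := by
      rw [← Int.toNat_of_nonneg n1, ← Int.toNat_of_nonneg n2, hkk]
    have e2 : ((a:ℤ)*m1) ≡ ((a:ℤ)*m2) [ZMOD (q:ℤ)] := by
      have e1' : ((a*m1:ℕ) : ℤ) + s ≡ ((a*m2:ℕ):ℤ) + s [ZMOD (q:ℤ)] := e1
      have := e1'.add_right_cancel' s
      push_cast at this ⊢
      exact this
    have e3 : (m1:ℤ) ≡ (m2:ℤ) [ZMOD (q:ℤ)] := by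
      have hg : Int.gcd (q:ℤ) (a:ℤ) = 1 := by
        rw [Int.gcd_natCast_natCast, Nat.gcd_comm]; exact hgcd
      have h := Int.ModEq.cancel_left_div_gcd (by exact_mod_cast hq0 : (0:ℤ) < (q:ℤ)) e2
      rwa [hg, Nat.cast_one, Int.ediv_one] at h
    have e4 : (m1:ℤ) % (q:ℤ) = (m2:ℤ) % (q:ℤ) := e3
    have l1 : (m1:ℤ) % (q:ℤ) = m1 := Int.emod_eq_of_lt (by positivity) (by exact_mod_cast hm1)
    have l2 : (m2:ℤ) % (q:ℤ) = m2 := Int.emod_eq_of_lt (by positivity) (by exact_mod_cast hm2)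
    have : (m1:ℤ) = (m2:ℤ) := by rw [← l1, ← l2, e4]
    exact_mod_cast this
  have himg : (Finset.range q).image k = Finset.range q := by
    apply Finset.eq_of_subset_of_card_le
    · intro t ht
      rcases Finset.mem_image.mp ht with ⟨m, _, rfl⟩
      exact Finset.mem_range.mpr (hklt m)
    · rw [Finset.card_image_of_injOn hinj]
  calc ∑ m ∈ Finset.range q, f (j*q+m+1)
      ≤ ∑ m ∈ Finset.range q, F (k m) :=
        Finset.sum_le_sum fun m hm => hfF m (Finset.mem_range.mp hm)
    _ = ∑ t ∈ (Finset.range q).image k, F t := (Finset.sum_image fun m hm m' hm' h =>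
        hinj (by simpa using hm) (by simpa using hm') h).symm
    _ = ∑ t ∈ Finset.range q, F t := by rw [himg]
    _ ≤ 6*(U + (q:ℝ)*Real.log q) := by rw [hF]; exact Fsum q hq7 U hU



/-- Technical lemma for Weyl sums: if `α = a/q + θ/q²` with `0 ≤ a < q`, `(a,q)=1`,
`|θ| ≤ 1`, then for all `β, U > 0` and `P ≥ 1`,
`∑_{n=1}^{P} min{U, 1/‖αn+β‖} ≤ 6(1 + P/q)(U + q log q)`, where `‖x‖` is the
distance of `x` to the nearest integer (a term with `‖αn+β‖ = 0` contributes `U`). -/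
theorem stmt_11 (α : ℝ) (a q : ℕ) (θ : ℝ) (ha : a < q) (hgcd : Nat.gcd a q = 1)
    (hθ : |θ| ≤ 1) (hα : α = (a : ℝ) / (q : ℝ) + θ / (q : ℝ) ^ 2)
    (β U : ℝ) (hβ : 0 < β) (hU : 0 < U) (P : ℝ) (hP : 1 ≤ P) :
    ∑ n ∈ Finset.Icc 1 ⌊P⌋₊,
        (if |α * (n : ℝ) + β - (round (α * (n : ℝ) + β) : ℝ)| = 0 then U
         else min U (|α * (n : ℝ) + β - (round (α * (n : ℝ) + β) : ℝ)|)⁻¹)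
      ≤ 6 * (1 + P / (q : ℝ)) * (U + (q : ℝ) * Real.log (q : ℝ)) := by
  have hq0 : 0 < q := by omega
  have hqR : (0:ℝ) < q := by exact_mod_cast hq0
  have hq1R : (1:ℝ) ≤ q := by exact_mod_cast hq0
  have hlog0 : 0 ≤ Real.log q := Real.log_nonneg hq1R
  set f : ℕ → ℝ := fun n => if |α * (n:ℝ) + β - (round (α * (n:ℝ) + β) : ℝ)| = 0 then U
      else min U (|α * (n:ℝ) + β - (round (α * (n:ℝ) + β) : ℝ)|)⁻¹ with hfdef
  have hf : ∀ n : ℕ, f n = if |α * (n:ℝ) + β - (round (α * (n:ℝ) + β) : ℝ)| = 0 then U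
      else min U (|α * (n:ℝ) + β - (round (α * (n:ℝ) + β) : ℝ)|)⁻¹ := fun n => rfl
  have hfU : ∀ n, f n ≤ U := by
    intro n; rw [hf]; split
    · exact le_refl U
    · exact min_le_left _ _
  have hfnn : ∀ n, 0 ≤ f n := by
    intro n; rw [hf]; split
    · exact hU.le
    · exact le_min hU.le (inv_nonneg.mpr (abs_nonneg _))
  set M := ⌊P⌋₊ with hM
  have hMP : (M:ℝ) ≤ P := Nat.floor_le (by linarith)
  show ∑ n ∈ Finset.Icc 1 M, f n ≤ _
  by_cases hq6 : q ≤ 6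
  · -- trivial bound
    have h1 : ∑ n ∈ Finset.Icc 1 M, f n ≤ (M:ℝ) * U := by
      calc ∑ n ∈ Finset.Icc 1 M, f n ≤ ∑ n ∈ Finset.Icc 1 M, U :=
            Finset.sum_le_sum fun n _ => hfU n
        _ = (M:ℝ) * U := by
            rw [Finset.sum_const, Nat.card_Icc]
            simp [nsmul_eq_mul]
    have hq6R : (q:ℝ) ≤ 6 := by exact_mod_cast hq6
    have h2 : P ≤ 6 * (P/q) := by
      rw [mul_div_assoc'] at *
      rw [le_div_iff₀ hqR]
      nlinarith
    have hD : 0 ≤ P/q := by positivity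
    nlinarith [mul_nonneg hD (mul_nonneg hqR.le hlog0), mul_nonneg hqR.le hlog0,
      mul_le_mul_of_nonneg_right h2 hU.le]
  · have hq7 : 7 ≤ q := by omega
    set K := M / q + 1 with hK
    have hcover : Finset.Icc 1 M ⊆
        (Finset.range K ×ˢ Finset.range q).image (fun p => p.1 * q + p.2 + 1) := by
      intro n hn
      rw [Finset.mem_Icc] at hn
      refine Finset.mem_image.mpr ⟨((n-1)/q, (n-1)%q), ?_, ?_⟩
      · rw [Finset.mem_product, Finset.mem_range, Finset.mem_range]
        constructor
        · have h1 : (n-1)/q ≤ M/q := Nat.div_le_div_right (by omega)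
          omega
        · exact Nat.mod_lt _ hq0
      · have h1 : (n-1)/q * q + (n-1)%q = n - 1 := Nat.div_add_mod' _ _
        dsimp only
        omega
    have hinjp : ∀ p1 ∈ Finset.range K ×ˢ Finset.range q,
        ∀ p2 ∈ Finset.range K ×ˢ Finset.range q,
        (fun p : ℕ × ℕ => p.1 * q + p.2 + 1) p1 = (fun p : ℕ × ℕ => p.1 * q + p.2 + 1) p2
        → p1 = p2 := by
      rintro ⟨j1, m1⟩ h1 ⟨j2, m2⟩ h2 h
      rw [Finset.mem_product, Finset.mem_range, Finset.mem_range] at h1 h2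
      dsimp only at h
      have e1' : q * j1 + m1 = q * j2 + m2 := by
        rw [mul_comm q j1, mul_comm q j2]; omega
      have em1 : (q * j1 + m1) % q = m1 := by
        rw [Nat.mul_add_mod, Nat.mod_eq_of_lt h1.2]
      have em2 : (q * j2 + m2) % q = m2 := by
        rw [Nat.mul_add_mod, Nat.mod_eq_of_lt h2.2]
      have hm : m1 = m2 := by rw [← em1, e1', em2]
      have hj : j1 = j2 := by
        have : q * j1 = q * j2 := by omega
        exact Nat.eq_of_mul_eq_mul_left hq0 this
      simp [hm, hj]
    have hKP : (K:ℝ) ≤ 1 + P / q := by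
      have h1 : ((M/q : ℕ):ℝ) ≤ (M:ℝ)/q := Nat.cast_div_le
      have h2 : (M:ℝ)/q ≤ P/q := by
        exact div_le_div_of_nonneg_right hMP hqR.le
      rw [hK]
      push_cast
      linarith
    have hXnn : (0:ℝ) ≤ 6*(U + (q:ℝ)*Real.log q) := by positivity
    calc ∑ n ∈ Finset.Icc 1 M, f n
        ≤ ∑ n ∈ (Finset.range K ×ˢ Finset.range q).image (fun p => p.1 * q + p.2 + 1), f n :=
          Finset.sum_le_sum_of_subset_of_nonneg hcover fun i _ _ => hfnn i
      _ = ∑ p ∈ Finset.range K ×ˢ Finset.range q, f (p.1 * q + p.2 + 1) :=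
          Finset.sum_image hinjp
      _ = ∑ j ∈ Finset.range K, ∑ m ∈ Finset.range q, f (j * q + m + 1) :=
          Finset.sum_product _ _ _
      _ ≤ ∑ j ∈ Finset.range K, 6*(U + (q:ℝ)*Real.log q) :=
          Finset.sum_le_sum fun j _ =>
            keyblock a q θ ha hq7 hgcd hθ α β U hα hU j f hf
      _ = (K:ℝ) * (6*(U + (q:ℝ)*Real.log q)) := by
          rw [Finset.sum_const, Finset.card_range, nsmul_eq_mul]
      _ ≤ (1 + P/q) * (6*(U + (q:ℝ)*Real.log q)) :=
          mul_le_mul_of_nonneg_right hKP hXnn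
      _ = 6 * (1 + P / (q:ℝ)) * (U + (q:ℝ)*Real.log q) := by ring
end

section
/- Let (𝔞_m : m ∈ ℤ₊^k) be a k-parameter family of measurable functions on a σ-finite measure space X, and let τ > 1, 𝔻_τ := {τⁿ : n ∈ ℕ}. Then for every p ∈ [1, ∞], ‖ sup_{M ∈ 𝔻_τ^k} | 𝔼_{m ∈ Q_M} 𝔞_m | ‖_{L^p(X)} ≲_{k,τ} ‖ sup_{M ∈ 𝔻_τ^k} | 𝔼_{m ∈ R_M} 𝔞_m | ‖_{L^p(X)}, where Q_M := [M₁] × ⋯ × [M_k] is the full rectangle and R_M := ([M₁] \ [τ^{-1}M₁]) × ⋯ × ([M_k] \ [τ^{-1}M_k]) is the truncated rectangle. -/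
open MeasureTheory
open scoped ENNReal NNReal

/-- The `L^p`-"norm" (for `p ∈ [1,∞]`) of an `ℝ≥0∞`-valued function:
`(∫ g^p dμ)^{1/p}` for finite `p`, and the essential supremum for `p = ∞`. -/
noncomputable def eLpE {X : Type*} [MeasurableSpace X] (μ : Measure X) (p : ℝ≥0∞)
    (g : X → ℝ≥0∞) : ℝ≥0∞ :=
  if p = ∞ then essSup g μ
  else (∫⁻ x, g x ^ p.toReal ∂μ) ^ (1 / p.toReal)

lemma eLpE_mono {X : Type*} [MeasurableSpace X] (μ : Measure X) (p : ℝ≥0∞)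
    {f g : X → ℝ≥0∞} (h : ∀ x, f x ≤ g x) : eLpE μ p f ≤ eLpE μ p g := by
  unfold eLpE
  split_ifs with hp
  · exact essSup_mono_ae (Filter.Eventually.of_forall h)
  · exact ENNReal.rpow_le_rpow
      (lintegral_mono fun x => ENNReal.rpow_le_rpow (h x) ENNReal.toReal_nonneg)
      (by positivity)

section Aux

variable {τ : ℝ}

lemma aux_b_succ (hτ : 1 < τ) (l : ℕ) : ⌊τ ^ (l + 1) / τ⌋₊ = ⌊τ ^ l⌋₊ := by
  rw [pow_succ, mul_div_cancel_right₀ _ (by linarith : τ ≠ 0)]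

lemma aux_b_zero (hτ : 1 < τ) : ⌊τ ^ 0 / τ⌋₊ = 0 := by
  rw [pow_zero]
  exact Nat.floor_eq_zero.2 (by rw [div_lt_one (by linarith)]; linarith)

lemma aux_c_one_le (hτ : 1 < τ) (n : ℕ) : 1 ≤ ⌊τ ^ n⌋₊ :=
  Nat.le_floor (by exact_mod_cast one_le_pow₀ hτ.le)

lemma aux_c_mono (hτ : 1 < τ) : Monotone fun n : ℕ => ⌊τ ^ n⌋₊ :=
  fun _ _ h => Nat.floor_mono (pow_le_pow_right₀ hτ.le h)

/-- Per-coordinate decomposition of the full interval into truncated intervals. -/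
lemma Icc_one_eq_Ioc (m : ℕ) : Finset.Icc 1 m = Finset.Ioc 0 m := by
  ext x; simp; omega

lemma aux_decomp (hτ : 1 < τ) (n : ℕ) :
    Finset.Icc 1 ⌊τ ^ n⌋₊ =
      (Finset.Iic n).biUnion fun l => Finset.Ioc ⌊τ ^ l / τ⌋₊ ⌊τ ^ l⌋₊ := by
  induction n with
  | zero =>
    rw [show Finset.Iic 0 = {0} from rfl, Finset.singleton_biUnion, aux_b_zero hτ,
      Icc_one_eq_Ioc]
  | succ n ih =>
    have hIic : Finset.Iic (n + 1) = insert (n + 1) (Finset.Iic n) := by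
      ext x; simp [Nat.le_succ_iff_eq_or_le]
    rw [hIic, Finset.biUnion_insert, ← ih, aux_b_succ hτ, Icc_one_eq_Ioc, Icc_one_eq_Ioc,
      Finset.union_comm,
      Finset.Ioc_union_Ioc_eq_Ioc (Nat.zero_le _) (aux_c_mono hτ (Nat.le_succ n))]

/-- Distinct truncated intervals are disjoint. -/
lemma aux_disj (hτ : 1 < τ) {l l' : ℕ} (h : l ≠ l') :
    Disjoint (Finset.Ioc ⌊τ ^ l / τ⌋₊ ⌊τ ^ l⌋₊) (Finset.Ioc ⌊τ ^ l' / τ⌋₊ ⌊τ ^ l'⌋₊) := by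
  have key : ∀ a b : ℕ, a < b →
      Disjoint (Finset.Ioc ⌊τ ^ a / τ⌋₊ ⌊τ ^ a⌋₊) (Finset.Ioc ⌊τ ^ b / τ⌋₊ ⌊τ ^ b⌋₊) := by
    intro a b hab
    have hle : ⌊τ ^ a⌋₊ ≤ ⌊τ ^ b / τ⌋₊ := by
      obtain ⟨m, rfl⟩ : ∃ m, b = m + 1 := ⟨b - 1, by omega⟩
      rw [aux_b_succ hτ]
      exact aux_c_mono hτ (by omega)
    rw [Finset.disjoint_left]
    intro x hx hx'
    rw [Finset.mem_Ioc] at hx hx'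
    omega
  rcases h.lt_or_gt with hlt | hlt
  · exact key _ _ hlt
  · exact (key _ _ hlt).symm

lemma piFinset_biUnion {k : ℕ} (t : Fin k → Finset ℕ) (g : Fin k → ℕ → Finset ℕ) :
    (Fintype.piFinset fun i => (t i).biUnion (g i)) =
      (Fintype.piFinset t).biUnion fun l => Fintype.piFinset fun i => g i (l i) := by
  ext m
  simp only [Fintype.mem_piFinset, Finset.mem_biUnion]
  constructor
  · intro h
    choose L h1 h2 using h
    exact ⟨L, h1, h2⟩
  · rintro ⟨L, h1, h2⟩ i
    exact ⟨L i, h1 i, h2 i⟩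

/-- The key pointwise inequality: the full average is at most the sup of truncated averages. -/
lemma aux_key (hτ : 1 < τ) {k : ℕ} (f : (Fin k → ℕ) → ℂ) (n : Fin k → ℕ) :
    (‖((Fintype.piFinset fun i => Finset.Icc 1 ⌊τ ^ (n i)⌋₊).card : ℂ)⁻¹ *
        ∑ m ∈ Fintype.piFinset (fun i => Finset.Icc 1 ⌊τ ^ (n i)⌋₊), f m‖₊ : ℝ≥0∞)
      ≤ ⨆ l : Fin k → ℕ,
        (‖((Fintype.piFinset fun i =>
              Finset.Ioc ⌊τ ^ (l i) / τ⌋₊ ⌊τ ^ (l i)⌋₊).card : ℂ)⁻¹ *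
            ∑ m ∈ Fintype.piFinset (fun i => Finset.Ioc ⌊τ ^ (l i) / τ⌋₊ ⌊τ ^ (l i)⌋₊),
              f m‖₊ : ℝ≥0∞) := by
  classical
  set Q : Finset (Fin k → ℕ) := Fintype.piFinset fun i => Finset.Icc 1 ⌊τ ^ (n i)⌋₊ with hQdef
  set R : (Fin k → ℕ) → Finset (Fin k → ℕ) :=
    fun l => Fintype.piFinset fun i => Finset.Ioc ⌊τ ^ (l i) / τ⌋₊ ⌊τ ^ (l i)⌋₊ with hRdef
  set L : Finset (Fin k → ℕ) := Fintype.piFinset fun i => Finset.Iic (n i) with hLdef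
  set S : ℝ≥0∞ := ⨆ l : Fin k → ℕ, (‖((R l).card : ℂ)⁻¹ * ∑ m ∈ R l, f m‖₊ : ℝ≥0∞) with hSdef
  -- decomposition of Q as a disjoint union
  have hQ : Q = L.biUnion R := by
    rw [hQdef]
    have h1 : (Fintype.piFinset fun i => Finset.Icc 1 ⌊τ ^ (n i)⌋₊) =
        Fintype.piFinset fun i =>
          (Finset.Iic (n i)).biUnion fun l => Finset.Ioc ⌊τ ^ l / τ⌋₊ ⌊τ ^ l⌋₊ := by
      congr 1
      ext i : 1
      exact aux_decomp hτ (n i)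
    rw [h1, piFinset_biUnion]
  have hdisjQ : ∀ l ∈ L, ∀ l' ∈ L, l ≠ l' → Disjoint (R l) (R l') := by
    intro l _ l' _ hne
    obtain ⟨i, hi⟩ := Function.ne_iff.1 hne
    rw [Finset.disjoint_left]
    intro m hm hm'
    exact Finset.disjoint_left.1 (aux_disj hτ hi)
      (Fintype.mem_piFinset.1 hm i) (Fintype.mem_piFinset.1 hm' i)
  have hsum : ∑ m ∈ Q, f m = ∑ l ∈ L, ∑ m ∈ R l, f m := by
    rw [hQ]
    exact Finset.sum_biUnion fun l hl l' hl' h => hdisjQ l hl l' hl' h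
  have hcard : Q.card = ∑ l ∈ L, (R l).card := by
    rw [hQ]
    exact Finset.card_biUnion hdisjQ
  have hq0 : Q.card ≠ 0 := by
    have : (fun _ : Fin k => 1) ∈ Q :=
      Fintype.mem_piFinset.2 fun i => Finset.mem_Icc.2 ⟨le_refl 1, aux_c_one_le hτ (n i)⟩
    exact Finset.card_ne_zero_of_mem this
  -- norm of inverse-cast card
  have hinv : ∀ (r : ℕ), r ≠ 0 → (‖((r : ℂ))⁻¹‖₊ : ℝ≥0∞) = ((r : ℝ≥0∞))⁻¹ := by
    intro r hr
    have h1 : ‖(r : ℂ)‖₊ = (r : ℝ≥0) := by simp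
    rw [nnnorm_inv, h1, ENNReal.coe_inv (by exact_mod_cast hr), ENNReal.coe_natCast]
  -- each truncated block sum is bounded by its card times S
  have hblock : ∀ l : Fin k → ℕ,
      (‖∑ m ∈ R l, f m‖₊ : ℝ≥0∞) ≤ ((R l).card : ℝ≥0∞) * S := by
    intro l
    rcases eq_or_ne ((R l).card) 0 with h | h
    · have : R l = ∅ := Finset.card_eq_zero.1 h
      simp [this]
    · have hcast : ((R l).card : ℂ) ≠ 0 := Nat.cast_ne_zero.2 h
      have heq : (‖∑ m ∈ R l, f m‖₊ : ℝ≥0∞) =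
          ((R l).card : ℝ≥0∞) * (‖((R l).card : ℂ)⁻¹ * ∑ m ∈ R l, f m‖₊ : ℝ≥0∞) := by
        rw [nnnorm_mul, ENNReal.coe_mul, hinv _ h, ← mul_assoc,
          ENNReal.mul_inv_cancel (by exact_mod_cast h) (by simp), one_mul]
      rw [heq]
      exact mul_le_mul_right (le_iSup (fun l => (‖((R l).card : ℂ)⁻¹ *
        ∑ m ∈ R l, f m‖₊ : ℝ≥0∞)) l) _
  calc (‖((Q.card : ℂ))⁻¹ * ∑ m ∈ Q, f m‖₊ : ℝ≥0∞)
      = ((Q.card : ℝ≥0∞))⁻¹ * (‖∑ m ∈ Q, f m‖₊ : ℝ≥0∞) := by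
        rw [nnnorm_mul, ENNReal.coe_mul, hinv _ hq0]
    _ ≤ ((Q.card : ℝ≥0∞))⁻¹ * ∑ l ∈ L, (‖∑ m ∈ R l, f m‖₊ : ℝ≥0∞) := by
        refine mul_le_mul_right ?_ _
        rw [hsum]
        calc (‖∑ l ∈ L, ∑ m ∈ R l, f m‖₊ : ℝ≥0∞)
            ≤ ((∑ l ∈ L, ‖∑ m ∈ R l, f m‖₊ : ℝ≥0) : ℝ≥0∞) := by
              exact_mod_cast nnnorm_sum_le _ _
          _ = ∑ l ∈ L, (‖∑ m ∈ R l, f m‖₊ : ℝ≥0∞) := by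
              rw [ENNReal.coe_finset_sum]
    _ ≤ ((Q.card : ℝ≥0∞))⁻¹ * ∑ l ∈ L, ((R l).card : ℝ≥0∞) * S :=
        mul_le_mul_right (Finset.sum_le_sum fun l _ => hblock l) _
    _ = ((Q.card : ℝ≥0∞))⁻¹ * (((Q.card : ℝ≥0∞)) * S) := by
        rw [← Finset.sum_mul, hcard]
        norm_cast
    _ = S := by
        rw [← mul_assoc, ENNReal.inv_mul_cancel (by exact_mod_cast hq0) (by simp), one_mul]

end Aux

/-- For a `k`-parameter family `(𝔞_m : m ∈ ℤ₊^k)` of measurable functions on a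
σ-finite measure space, the `L^p` norm of the maximal function of the full averages
`𝔼_{m ∈ Q_M} 𝔞_m` over `M ∈ 𝔻_τ^k` is dominated (with constant depending only on
`k, τ`) by that of the truncated averages `𝔼_{m ∈ R_M} 𝔞_m`, where
`Q_M = [M₁]×⋯×[M_k]` and `R_M = ([M₁]∖[τ⁻¹M₁])×⋯×([M_k]∖[τ⁻¹M_k])`. -/
theorem stmt_13 (k : ℕ) (hk : 0 < k) (τ : ℝ) (hτ : 1 < τ) :
    ∃ C : ℝ≥0∞, 0 < C ∧ C ≠ ∞ ∧
      ∀ (X : Type) (_ : MeasurableSpace X) (μ : Measure X), SigmaFinite μ →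
      ∀ a : (Fin k → ℕ) → X → ℂ, (∀ m, Measurable (a m)) →
      ∀ p : ℝ≥0∞, 1 ≤ p →
      eLpE μ p (fun x => ⨆ n : Fin k → ℕ,
          (‖((Fintype.piFinset fun i => Finset.Icc 1 ⌊τ ^ (n i)⌋₊).card : ℂ)⁻¹ *
              ∑ m ∈ Fintype.piFinset (fun i => Finset.Icc 1 ⌊τ ^ (n i)⌋₊),
                a m x‖₊ : ℝ≥0∞))
        ≤ C * eLpE μ p (fun x => ⨆ n : Fin k → ℕ,
            (‖((Fintype.piFinset fun i =>
                    Finset.Ioc ⌊τ ^ (n i) / τ⌋₊ ⌊τ ^ (n i)⌋₊).card : ℂ)⁻¹ *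
                ∑ m ∈ Fintype.piFinset
                    (fun i => Finset.Ioc ⌊τ ^ (n i) / τ⌋₊ ⌊τ ^ (n i)⌋₊),
                  a m x‖₊ : ℝ≥0∞)) := by
  refine ⟨1, zero_lt_one, ENNReal.one_ne_top, ?_⟩
  intro X _ μ _ a _ p _
  rw [one_mul]
  refine eLpE_mono μ p fun x => ?_
  exact iSup_le fun n => aux_key hτ (fun m => a m x) n
end

section
/- (Degenerate case of the two-parameter oscillation theorem) Let T : X → X be an invertible measure-preserving transformation of a σ-finite measure space, P₁ ∈ ℤ[m₁], P₂ ∈ ℤ[m₂] with P₁(0) = P₂(0) = 0, and P(m₁,m₂) = P₁(m₁) + P₂(m₂). Assume the vector-valued maximal inequality ‖(Σ_ι sup_{M_i} |A^{P_i}_{M_i;X} f_ι|²)^{1/2}‖_{L^p} ≤ C_p ‖f‖_{L^p(X;ℓ²)} for i = 1, 2, and the one-parameter oscillation inequality sup_J sup_{I ∈ 𝔖_J(ℤ₊)} ‖O_{I,J}(A^{P_i}_{M_i;X} f : M_i ∈ ℤ₊)‖_{L^p} ≤ C_p ‖f‖_{L^p} for i = 1, 2. Then for every p ∈ (1, ∞)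 and f ∈ L^p(X), sup_{J ∈ ℤ₊} sup_{I ∈ 𝔖_J(ℤ₊²)} ‖O_{I,J}(A^P_{M₁,M₂;X} f : M₁, M₂ ∈ ℤ₊)‖_{L^p(X)} ≲_p ‖f‖_{L^p(X)}. -/
open MeasureTheory
open scoped ENNReal
open scoped NNReal

/-- The `L^p`-"norm" of an `ℝ≥0∞`-valued function, for finite real `p`. -/
noncomputable def eLpR {X : Type*} [MeasurableSpace X] (μ : Measure X) (p : ℝ)
    (g : X → ℝ≥0∞) : ℝ≥0∞ :=
  (∫⁻ x, g x ^ p ∂μ) ^ (1 / p)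

section Aux

variable {X : Type*} [MeasurableSpace X] {μ : Measure X}

private lemma perm_pow_mp {T : X ≃ X} (hT : MeasurePreserving (T : X → X) μ μ) (n : ℕ) :
    MeasurePreserving (⇑(T ^ n : X ≃ X)) μ μ := by
  induction n with
  | zero =>
      have h : ⇑(T ^ 0 : X ≃ X) = id := by funext x; simp
      rw [h]; exact MeasurePreserving.id μ
  | succ n ih =>
      have h : ⇑(T ^ (n + 1) : X ≃ X) = ⇑(T ^ n : X ≃ X) ∘ ⇑T := by
        funext x; simp [pow_succ, Equiv.Perm.mul_apply]
      rw [h]; exact ih.comp hT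

private lemma perm_zpow_mp {T : X ≃ X} (hT : MeasurePreserving (T : X → X) μ μ)
    {k : ℤ} (hk : 0 ≤ k) : MeasurePreserving (⇑(T ^ k : X ≃ X)) μ μ := by
  obtain ⟨n, rfl⟩ := Int.eq_ofNat_of_zero_le hk
  rw [zpow_natCast]; exact perm_pow_mp hT n

private lemma perm_zpow_add {Y : Type*} (T : Y ≃ Y) (a b : ℤ) (x : Y) :
    (T ^ a) ((T ^ b) x) = (T ^ (a + b)) x := by
  rw [zpow_add, Equiv.Perm.mul_apply]

private lemma measurable_finset_sup {ι : Type*} (s : Finset ι)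
    {F : ι → X → ℝ≥0} (hF : ∀ i ∈ s, Measurable (F i)) :
    Measurable fun x => s.sup fun i => F i x := by
  classical
  revert hF
  induction s using Finset.induction_on with
  | empty => intro _; simp only [Finset.sup_empty]; exact measurable_const
  | @insert a s ha ih =>
      intro hF
      simp only [Finset.sup_insert]
      exact (hF a (Finset.mem_insert_self a s)).sup
        (ih fun i hi => hF i (Finset.mem_insert_of_mem hi))

end Aux

set_option maxHeartbeats 1000000 in
/-- Degenerate case of the two-parameter oscillation theorem: for
`P(m₁,m₂) = P₁(m₁) + P₂(m₂)`, assuming the vector-valued maximal inequality and the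
one-parameter oscillation inequality for the averages `A^{P₁}_{M₁}` and `A^{P₂}_{M₂}`,
the two-parameter oscillation seminorm of `A^{P}_{M₁,M₂} f` is bounded on `L^p`. -/
theorem stmt_15 {X : Type*} [MeasurableSpace X] (μ : Measure X) [SigmaFinite μ]
    (T : X ≃ X) (hT : MeasurePreserving (T : X → X) μ μ)
    (P₁ P₂ : Polynomial ℤ) (h₁ : P₁.eval 0 = 0) (h₂ : P₂.eval 0 = 0)
    (p : ℝ) (hp : 1 < p)
    (A1 A2 : ℕ → (X → ℂ) → X → ℂ) (A12 : ℕ → ℕ → (X → ℂ) → X → ℂ)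
    (hA1 : ∀ M f x, A1 M f x
      = (M : ℂ)⁻¹ * ∑ m ∈ Finset.Icc 1 M, f ((T ^ (P₁.eval (m : ℤ))) x))
    (hA2 : ∀ M f x, A2 M f x
      = (M : ℂ)⁻¹ * ∑ m ∈ Finset.Icc 1 M, f ((T ^ (P₂.eval (m : ℤ))) x))
    (hA12 : ∀ M₁ M₂ f x, A12 M₁ M₂ f x
      = ((M₁ : ℂ) * (M₂ : ℂ))⁻¹ *
          ∑ m₁ ∈ Finset.Icc 1 M₁, ∑ m₂ ∈ Finset.Icc 1 M₂,
            f ((T ^ (P₁.eval (m₁ : ℤ) + P₂.eval (m₂ : ℤ))) x))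
    (Cp : ℝ≥0∞) (hCp : Cp ≠ ∞)
    (hmax1 : ∀ f : ℕ → X → ℂ, (∀ ι, Measurable (f ι)) →
      eLpR μ p (fun x => (∑' ι : ℕ,
          (⨆ (M : ℕ) (_ : 0 < M), (‖A1 M (f ι) x‖₊ : ℝ≥0∞)) ^ 2) ^ (1 / 2 : ℝ))
        ≤ Cp * eLpR μ p (fun x =>
            (∑' ι : ℕ, (‖f ι x‖₊ : ℝ≥0∞) ^ 2) ^ (1 / 2 : ℝ)))
    (hmax2 : ∀ f : ℕ → X → ℂ, (∀ ι, Measurable (f ι)) →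
      eLpR μ p (fun x => (∑' ι : ℕ,
          (⨆ (M : ℕ) (_ : 0 < M), (‖A2 M (f ι) x‖₊ : ℝ≥0∞)) ^ 2) ^ (1 / 2 : ℝ))
        ≤ Cp * eLpR μ p (fun x =>
            (∑' ι : ℕ, (‖f ι x‖₊ : ℝ≥0∞) ^ 2) ^ (1 / 2 : ℝ)))
    (hosc1 : ∀ f : X → ℂ, Measurable f →
      ∀ (J : ℕ) (I : ℕ → ℕ), (∀ j ≤ J, 0 < I j) → (∀ j < J, I j < I (j + 1)) →
      eLpR μ p (fun x => (∑ j ∈ Finset.range J,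
          (⨆ (M : ℕ) (_ : I j ≤ M ∧ M < I (j + 1)),
            (‖A1 M f x - A1 (I j) f x‖₊ : ℝ≥0∞)) ^ 2) ^ (1 / 2 : ℝ))
        ≤ Cp * eLpR μ p (fun x => (‖f x‖₊ : ℝ≥0∞)))
    (hosc2 : ∀ f : X → ℂ, Measurable f →
      ∀ (J : ℕ) (I : ℕ → ℕ), (∀ j ≤ J, 0 < I j) → (∀ j < J, I j < I (j + 1)) →
      eLpR μ p (fun x => (∑ j ∈ Finset.range J,
          (⨆ (M : ℕ) (_ : I j ≤ M ∧ M < I (j + 1)),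
            (‖A2 M f x - A2 (I j) f x‖₊ : ℝ≥0∞)) ^ 2) ^ (1 / 2 : ℝ))
        ≤ Cp * eLpR μ p (fun x => (‖f x‖₊ : ℝ≥0∞))) :
    ∃ C : ℝ≥0∞, C ≠ ∞ ∧
      ∀ f : X → ℂ, Measurable f →
      ∀ (J : ℕ) (I : ℕ → ℕ × ℕ),
        (∀ j ≤ J, 0 < (I j).1 ∧ 0 < (I j).2) →
        (∀ j < J, (I j).1 < (I (j + 1)).1 ∧ (I j).2 < (I (j + 1)).2) →
        eLpR μ p (fun x => (∑ j ∈ Finset.range J,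
            (⨆ (M : ℕ × ℕ) (_ : (I j).1 ≤ M.1 ∧ M.1 < (I (j + 1)).1 ∧
                (I j).2 ≤ M.2 ∧ M.2 < (I (j + 1)).2),
              (‖A12 M.1 M.2 f x - A12 (I j).1 (I j).2 f x‖₊ : ℝ≥0∞)) ^ 2)
            ^ (1 / 2 : ℝ))
          ≤ C * eLpR μ p (fun x => (‖f x‖₊ : ℝ≥0∞)) := by
  classical
  have hp0 : (0:ℝ) < p := lt_trans zero_lt_one hp
  have hp1 : (1:ℝ) ≤ p := hp.le
  refine ⟨4 * Cp * Cp, ENNReal.mul_ne_top (ENNReal.mul_ne_top (by norm_num) hCp) hCp, ?_⟩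
  intro f hf J I hIpos hImono
  -- monotonicity of the components of I
  have hmono : ∀ j k : ℕ, j ≤ k → k ≤ J → (I j).1 ≤ (I k).1 ∧ (I j).2 ≤ (I k).2 := by
    intro j k
    induction k with
    | zero =>
        intro hjk _
        obtain rfl : j = 0 := Nat.le_zero.mp hjk
        exact ⟨le_rfl, le_rfl⟩
    | succ k ih =>
        intro hjk hkJ
        rcases eq_or_lt_of_le hjk with rfl | h
        · exact ⟨le_rfl, le_rfl⟩
        · have hj : j ≤ k := Nat.lt_succ_iff.mp h
          have h1 := hImono k (Nat.lt_of_succ_le hkJ)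
          have h2 := ih hj (le_trans (Nat.le_succ k) hkJ)
          exact ⟨le_trans h2.1 h1.1.le, le_trans h2.2 h1.2.le⟩
  set B : ℕ := max (I J).1 (I J).2 with hBdef
  set N₁ : ℕ := (Finset.Icc 1 B).sup (fun m : ℕ => (-(P₁.eval (m:ℤ))).toNat) with hN₁def
  set N₂ : ℕ := (Finset.Icc 1 B).sup (fun m : ℕ => (-(P₂.eval (m:ℤ))).toNat) with hN₂def
  set N : ℕ := N₁ + N₂ with hNdef
  have hNZ : (N:ℤ) = (N₁:ℤ) + (N₂:ℤ) := by rw [hNdef]; push_cast; ring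
  have hN₁le : ∀ m : ℕ, 1 ≤ m → m ≤ B → -(P₁.eval (m:ℤ)) ≤ (N₁:ℤ) := by
    intro m hm1 hm2
    have h := Finset.le_sup (f := fun m : ℕ => (-(P₁.eval (m:ℤ))).toNat)
      (Finset.mem_Icc.mpr ⟨hm1, hm2⟩)
    omega
  have hN₂le : ∀ m : ℕ, 1 ≤ m → m ≤ B → -(P₂.eval (m:ℤ)) ≤ (N₂:ℤ) := by
    intro m hm1 hm2
    have h := Finset.le_sup (f := fun m : ℕ => (-(P₂.eval (m:ℤ))).toNat)
      (Finset.mem_Icc.mpr ⟨hm1, hm2⟩)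
    omega
  set S : X ≃ X := T ^ (N:ℤ) with hSdef
  have hS : MeasurePreserving (⇑S) μ μ := perm_zpow_mp hT (by positivity)
  have hSc : ∀ (k : ℤ) (x : X), (T ^ k) (S x) = S ((T ^ k) x) := by
    intro k x
    rw [hSdef, perm_zpow_add, perm_zpow_add, add_comm]
  have hTk : ∀ k : ℤ, 0 ≤ k → Measurable fun x => (T ^ k) x :=
    fun k hk => (perm_zpow_mp hT hk).measurable
  set f' : X → ℂ := fun x => f (S x) with hf'def
  have hf' : Measurable f' := hf.comp hS.measurable
  have hf'kmeas : ∀ (q k : ℤ), 0 ≤ (N:ℤ) + q + k →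
      Measurable fun x => f' ((T ^ q) ((T ^ k) x)) := by
    intro q k hqk
    have he : (fun x => f' ((T ^ q) ((T ^ k) x))) = fun x => f ((T ^ ((N:ℤ) + q + k)) x) := by
      funext x
      rw [hf'def]
      show f (S ((T ^ q) ((T ^ k) x))) = f ((T ^ ((N:ℤ) + q + k)) x)
      rw [perm_zpow_add T q k, hSdef, perm_zpow_add T (N:ℤ) (q + k), add_assoc]
    rw [he]
    exact hf.comp (hTk _ hqk)
  have hA1meas : ∀ (M : ℕ), M ≤ B → ∀ k : ℤ, 0 ≤ (N₂:ℤ) + k →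
      Measurable fun x => A1 M f' ((T ^ k) x) := by
    intro M hM k hk
    simp only [hA1]
    refine (Finset.measurable_sum _ fun m hm => ?_).const_mul _
    rw [Finset.mem_Icc] at hm
    refine hf'kmeas (P₁.eval (m:ℤ)) k ?_
    have h := hN₁le m hm.1 (le_trans hm.2 hM)
    omega
  have hA2meas : ∀ (M : ℕ), M ≤ B → ∀ k : ℤ, 0 ≤ (N₁:ℤ) + k →
      Measurable fun x => A2 M f' ((T ^ k) x) := by
    intro M hM k hk
    simp only [hA2]
    refine (Finset.measurable_sum _ fun m hm => ?_).const_mul _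
    rw [Finset.mem_Icc] at hm
    refine hf'kmeas (P₂.eval (m:ℤ)) k ?_
    have h := hN₂le m hm.1 (le_trans hm.2 hM)
    omega
  -- bounds on box entries
  have hB1 : ∀ j, j < J → (I (j+1)).1 ≤ B :=
    fun j hj => le_trans (hmono (j+1) J hj J.le_refl |>.1) (le_max_left _ _)
  have hB2 : ∀ j, j < J → (I (j+1)).2 ≤ B :=
    fun j hj => le_trans (hmono (j+1) J hj J.le_refl |>.2) (le_max_right _ _)
  have hB1' : ∀ j, j ≤ J → (I j).1 ≤ B :=
    fun j hj => le_trans (hmono j J hj J.le_refl |>.1) (le_max_left _ _)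
  have hB2' : ∀ j, j ≤ J → (I j).2 ≤ B :=
    fun j hj => le_trans (hmono j J hj J.le_refl |>.2) (le_max_right _ _)
  -- the two auxiliary function families
  set g₁ : ℕ → X → ℂ := fun j x =>
    ((((Finset.Ico (I j).2 (I (j+1)).2).sup
        fun M => ‖A2 M f' x - A2 ((I j).2) f' x‖₊ : ℝ≥0) : ℝ) : ℂ) with hg₁def
  set g₂ : ℕ → X → ℂ := fun j x =>
    ((((Finset.Ico (I j).1 (I (j+1)).1).sup
        fun M => ‖A1 M f' x - A1 ((I j).1) f' x‖₊ : ℝ≥0) : ℝ) : ℂ) with hg₂def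
  have hg₁norm : ∀ j x, ‖g₁ j x‖₊
      = (Finset.Ico (I j).2 (I (j+1)).2).sup
          fun M => ‖A2 M f' x - A2 ((I j).2) f' x‖₊ := by
    intro j x
    rw [hg₁def]
    simp only [Complex.nnnorm_real, NNReal.nnnorm_eq]
  have hg₂norm : ∀ j x, ‖g₂ j x‖₊
      = (Finset.Ico (I j).1 (I (j+1)).1).sup
          fun M => ‖A1 M f' x - A1 ((I j).1) f' x‖₊ := by
    intro j x
    rw [hg₂def]
    simp only [Complex.nnnorm_real, NNReal.nnnorm_eq]
  -- measurability of the families (composed with a power of T)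
  have hg₁k : ∀ j, j < J → ∀ k : ℤ, 0 ≤ (N₁:ℤ) + k →
      Measurable fun x => g₁ j ((T ^ k) x) := by
    intro j hj k hk
    simp only [hg₁def]
    refine Complex.measurable_ofReal.comp (measurable_coe_nnreal_real.comp ?_)
    refine measurable_finset_sup _ fun M hM => ?_
    rw [Finset.mem_Ico] at hM
    exact ((hA2meas M (le_trans hM.2.le (hB2 j hj)) k hk).sub
      (hA2meas _ (hB2' j hj.le) k hk)).nnnorm
  have hg₂k : ∀ j, j < J → ∀ k : ℤ, 0 ≤ (N₂:ℤ) + k →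
      Measurable fun x => g₂ j ((T ^ k) x) := by
    intro j hj k hk
    simp only [hg₂def]
    refine Complex.measurable_ofReal.comp (measurable_coe_nnreal_real.comp ?_)
    refine measurable_finset_sup _ fun M hM => ?_
    rw [Finset.mem_Ico] at hM
    exact ((hA1meas M (le_trans hM.2.le (hB1 j hj)) k hk).sub
      (hA1meas _ (hB1' j hj.le) k hk)).nnnorm
  have hT0 : ∀ g : X → ℂ, (fun x => g ((T ^ (0:ℤ)) x)) = g := by
    intro g; funext x; norm_num
  have hg₁meas : ∀ j, j < J → Measurable (g₁ j) := by
    intro j hj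
    have h := hg₁k j hj 0 (by positivity)
    rwa [hT0] at h
  have hg₂meas : ∀ j, j < J → Measurable (g₂ j) := by
    intro j hj
    have h := hg₂k j hj 0 (by positivity)
    rwa [hT0] at h
  have hvmeas : ∀ j, j < J → Measurable fun x => A2 ((I j).2) (g₂ j) x := by
    intro j hj
    simp only [hA2]
    refine (Finset.measurable_sum _ fun m hm => ?_).const_mul _
    rw [Finset.mem_Icc] at hm
    refine hg₂k j hj (P₂.eval (m:ℤ)) ?_
    have h := hN₂le m hm.1 (le_trans hm.2 (hB2' j hj.le))
    omega
  have hTadd : ∀ (a b : ℤ) (x : X), (T ^ a) ((T ^ b) x) = (T ^ (a + b)) x :=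
    perm_zpow_add T
  -- commuting the averages with the shift S
  have hA2S : ∀ (M : ℕ) (z : X), A2 M f' z = A2 M f (S z) := by
    intro M z
    rw [hA2, hA2]
    congr 1
    refine Finset.sum_congr rfl fun m _ => ?_
    rw [hf'def]
    show f (S ((T ^ P₂.eval (m:ℤ)) z)) = f ((T ^ P₂.eval (m:ℤ)) (S z))
    rw [hSc]
  have hA1S : ∀ (M : ℕ) (z : X), A1 M f' z = A1 M f (S z) := by
    intro M z
    rw [hA1, hA1]
    congr 1
    refine Finset.sum_congr rfl fun m _ => ?_
    rw [hf'def]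
    show f (S ((T ^ P₁.eval (m:ℤ)) z)) = f ((T ^ P₁.eval (m:ℤ)) (S z))
    rw [hSc]
  -- decomposition of the double average
  have hdecomp2 : ∀ (M₁ M₂ : ℕ) (y : X),
      A12 M₁ M₂ f y = (M₁:ℂ)⁻¹ * ∑ m₁ ∈ Finset.Icc 1 M₁,
        A2 M₂ f ((T ^ P₁.eval (m₁:ℤ)) y) := by
    intro M₁ M₂ y
    have hterm : ∀ m₁ : ℕ, A2 M₂ f ((T ^ P₁.eval (m₁:ℤ)) y)
        = (M₂:ℂ)⁻¹ * ∑ m₂ ∈ Finset.Icc 1 M₂,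
            f ((T ^ (P₁.eval (m₁:ℤ) + P₂.eval (m₂:ℤ))) y) := by
      intro m₁
      rw [hA2]
      congr 1
      refine Finset.sum_congr rfl fun m₂ _ => ?_
      rw [hTadd, add_comm]
    rw [hA12]
    simp only [hterm, Finset.mul_sum, mul_inv, mul_assoc]
  have hdecomp1 : ∀ (M₁ M₂ : ℕ) (y : X),
      A12 M₁ M₂ f y = (M₂:ℂ)⁻¹ * ∑ m₂ ∈ Finset.Icc 1 M₂,
        A1 M₁ f ((T ^ P₂.eval (m₂:ℤ)) y) := by
    intro M₁ M₂ y
    have hterm : ∀ m₂ : ℕ, A1 M₁ f ((T ^ P₂.eval (m₂:ℤ)) y)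
        = (M₁:ℂ)⁻¹ * ∑ m₁ ∈ Finset.Icc 1 M₁,
            f ((T ^ (P₁.eval (m₁:ℤ) + P₂.eval (m₂:ℤ))) y) := by
      intro m₂
      rw [hA1]
      congr 1
      refine Finset.sum_congr rfl fun m₁ _ => ?_
      rw [hTadd]
    rw [hA12, mul_inv]
    simp only [hterm, Finset.mul_sum, mul_assoc]
    rw [Finset.sum_comm]
    exact Finset.sum_congr rfl fun m₂ _ => Finset.sum_congr rfl fun m₁ _ => by ring
  -- generic average bound
  have hkey : ∀ (K : ℕ) (Q : ℕ → ℤ) (d : X → ℂ) (r : X → ℝ≥0),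
      (∀ z, ‖d z‖₊ ≤ r z) → ∀ y : X,
      ‖(K:ℂ)⁻¹ * ∑ m ∈ Finset.Icc 1 K, d ((T ^ Q m) y)‖₊
        ≤ ‖(K:ℂ)⁻¹ * ∑ m ∈ Finset.Icc 1 K, ((r ((T ^ Q m) y) : ℝ) : ℂ)‖₊ := by
    intro K Q d r hdr y
    rw [nnnorm_mul, nnnorm_mul]
    refine mul_le_mul_right ?_ _
    have hco : (∑ m ∈ Finset.Icc 1 K, ((r ((T ^ Q m) y) : ℝ) : ℂ))
        = (((∑ m ∈ Finset.Icc 1 K, r ((T ^ Q m) y) : ℝ≥0) : ℝ) : ℂ) := by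
      push_cast
      rfl
    rw [hco, Complex.nnnorm_real, NNReal.nnnorm_eq]
    exact le_trans (nnnorm_sum_le _ _) (Finset.sum_le_sum fun m _ => hdr _)
  -- the two key estimates
  have key1 : ∀ j, j < J → ∀ (x : X) (M₁ M₂ : ℕ), (I j).2 ≤ M₂ → M₂ < (I (j+1)).2 →
      ‖A12 M₁ M₂ f (S x) - A12 M₁ ((I j).2) f (S x)‖₊ ≤ ‖A1 M₁ (g₁ j) x‖₊ := by
    intro j hj x M₁ M₂ h2 h2'
    have e1 : A12 M₁ M₂ f (S x) - A12 M₁ ((I j).2) f (S x)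
        = (M₁:ℂ)⁻¹ * ∑ m ∈ Finset.Icc 1 M₁,
            ((fun z => A2 M₂ f z - A2 ((I j).2) f z) ((T ^ P₁.eval (m:ℤ)) (S x))) := by
      rw [hdecomp2, hdecomp2, ← mul_sub, ← Finset.sum_sub_distrib]
    have e2 : A1 M₁ (g₁ j) x = (M₁:ℂ)⁻¹ * ∑ m ∈ Finset.Icc 1 M₁,
        ((((fun z => (Finset.Ico (I j).2 (I (j+1)).2).sup
            fun M => ‖A2 M f z - A2 ((I j).2) f z‖₊) ((T ^ P₁.eval (m:ℤ)) (S x)) : ℝ≥0) : ℝ) : ℂ) := by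
      rw [hA1]
      congr 1
      refine Finset.sum_congr rfl fun m _ => ?_
      simp only [hg₁def]
      norm_cast
      simp only [hA2S, hSc]
    have hb := hkey M₁ (fun m => P₁.eval (m:ℤ))
      (fun z => A2 M₂ f z - A2 ((I j).2) f z)
      (fun z => (Finset.Ico (I j).2 (I (j+1)).2).sup fun M => ‖A2 M f z - A2 ((I j).2) f z‖₊)
      (fun z => Finset.le_sup (f := fun M => ‖A2 M f z - A2 ((I j).2) f z‖₊)
        (Finset.mem_Ico.mpr ⟨h2, h2'⟩)) (S x)
    rw [e1, e2]
    exact hb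
  have key2 : ∀ j, j < J → ∀ (x : X) (M₁ : ℕ), (I j).1 ≤ M₁ → M₁ < (I (j+1)).1 →
      ‖A12 M₁ ((I j).2) f (S x) - A12 ((I j).1) ((I j).2) f (S x)‖₊
        ≤ ‖A2 ((I j).2) (g₂ j) x‖₊ := by
    intro j hj x M₁ h1 h1'
    have e1 : A12 M₁ ((I j).2) f (S x) - A12 ((I j).1) ((I j).2) f (S x)
        = ((I j).2:ℂ)⁻¹ * ∑ m ∈ Finset.Icc 1 ((I j).2),
            ((fun z => A1 M₁ f z - A1 ((I j).1) f z) ((T ^ P₂.eval (m:ℤ)) (S x))) := by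
      rw [hdecomp1, hdecomp1, ← mul_sub, ← Finset.sum_sub_distrib]
    have e2 : A2 ((I j).2) (g₂ j) x = (((I j).2:ℂ))⁻¹ * ∑ m ∈ Finset.Icc 1 ((I j).2),
        ((((fun z => (Finset.Ico (I j).1 (I (j+1)).1).sup
            fun M => ‖A1 M f z - A1 ((I j).1) f z‖₊) ((T ^ P₂.eval (m:ℤ)) (S x)) : ℝ≥0) : ℝ) : ℂ) := by
      rw [hA2]
      congr 1
      refine Finset.sum_congr rfl fun m _ => ?_
      simp only [hg₂def]
      norm_cast
      simp only [hA1S, hSc]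
    have hb := hkey ((I j).2) (fun m => P₂.eval (m:ℤ))
      (fun z => A1 M₁ f z - A1 ((I j).1) f z)
      (fun z => (Finset.Ico (I j).1 (I (j+1)).1).sup fun M => ‖A1 M f z - A1 ((I j).1) f z‖₊)
      (fun z => Finset.le_sup (f := fun M => ‖A1 M f z - A1 ((I j).1) f z‖₊)
        (Finset.mem_Ico.mpr ⟨h1, h1'⟩)) (S x)
    rw [e1, e2]
    exact hb
  -- abbreviations for the three integrand families
  set w : ℕ → X → ℝ≥0∞ := fun j y =>
    ⨆ (M : ℕ × ℕ) (_ : (I j).1 ≤ M.1 ∧ M.1 < (I (j + 1)).1 ∧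
        (I j).2 ≤ M.2 ∧ M.2 < (I (j + 1)).2),
      (‖A12 M.1 M.2 f y - A12 (I j).1 (I j).2 f y‖₊ : ℝ≥0∞) with hwdef
  set u : ℕ → X → ℝ≥0∞ := fun j x =>
    ⨆ (M : ℕ) (_ : 0 < M), (‖A1 M (g₁ j) x‖₊ : ℝ≥0∞) with hudef
  set v : ℕ → X → ℝ≥0∞ := fun j x => (‖A2 ((I j).2) (g₂ j) x‖₊ : ℝ≥0∞) with hvdef
  have hsq : ∀ a : ℝ≥0∞, a ^ (2:ℕ) = a ^ (2:ℝ) := by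
    intro a; rw [← ENNReal.rpow_natCast]; norm_num
  -- the core pointwise estimate
  have hcore : ∀ j, j < J → ∀ x, w j (S x) ≤ u j x + v j x := by
    intro j hj x
    simp only [hwdef, hudef, hvdef]
    refine iSup₂_le fun M hM => ?_
    obtain ⟨hM1, hM1', hM2, hM2'⟩ := hM
    have tri : ‖A12 M.1 M.2 f (S x) - A12 (I j).1 (I j).2 f (S x)‖₊
        ≤ ‖A12 M.1 M.2 f (S x) - A12 M.1 ((I j).2) f (S x)‖₊
          + ‖A12 M.1 ((I j).2) f (S x) - A12 ((I j).1) ((I j).2) f (S x)‖₊ := by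
      have hsplit : A12 M.1 M.2 f (S x) - A12 (I j).1 (I j).2 f (S x)
          = (A12 M.1 M.2 f (S x) - A12 M.1 ((I j).2) f (S x))
            + (A12 M.1 ((I j).2) f (S x) - A12 ((I j).1) ((I j).2) f (S x)) := by ring
      rw [hsplit]; exact nnnorm_add_le _ _
    refine le_trans (ENNReal.coe_le_coe.mpr tri) ?_
    rw [ENNReal.coe_add]
    refine add_le_add ?_ ?_
    · refine le_trans (ENNReal.coe_le_coe.mpr (key1 j hj x M.1 M.2 hM2 hM2')) ?_
      exact le_iSup₂ (f := fun (M' : ℕ) (_ : 0 < M') => (‖A1 M' (g₁ j) x‖₊ : ℝ≥0∞))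
        M.1 (lt_of_lt_of_le (hIpos j hj.le).1 hM1)
    · exact ENNReal.coe_le_coe.mpr (key2 j hj x M.1 hM1 hM1')
  -- pointwise ℓ²-Minkowski
  have hpoint : ∀ x, (∑ j ∈ Finset.range J, (w j (S x))^2)^(1/2:ℝ)
      ≤ (∑ j ∈ Finset.range J, (u j x)^2)^(1/2:ℝ)
        + (∑ j ∈ Finset.range J, (v j x)^2)^(1/2:ℝ) := by
    intro x
    have h1 : (∑ j ∈ Finset.range J, (w j (S x))^2)^(1/2:ℝ)
        ≤ (∑ j ∈ Finset.range J, (u j x + v j x)^2)^(1/2:ℝ) := by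
      refine ENNReal.rpow_le_rpow (Finset.sum_le_sum fun j hj => ?_) (by norm_num)
      exact pow_le_pow_left' (hcore j (Finset.mem_range.mp hj) x) 2
    refine le_trans h1 ?_
    have h2 := ENNReal.Lp_add_le (Finset.range J) (fun j => u j x) (fun j => v j x)
      (one_le_two (α := ℝ))
    simpa only [hsq] using h2
  -- step 1: pull back along the measure preserving shift S
  have step1 : eLpR μ p (fun y => (∑ j ∈ Finset.range J, (w j y)^2)^(1/2:ℝ))
      ≤ eLpR μ p (fun x => (∑ j ∈ Finset.range J, (w j (S x))^2)^(1/2:ℝ)) := by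
    simp only [eLpR]
    refine ENNReal.rpow_le_rpow ?_ (by positivity)
    calc ∫⁻ y, ((∑ j ∈ Finset.range J, (w j y)^2)^(1/2:ℝ))^p ∂μ
        = ∫⁻ y, ((∑ j ∈ Finset.range J, (w j y)^2)^(1/2:ℝ))^p ∂(Measure.map (⇑S) μ) := by
          rw [hS.map_eq]
      _ ≤ _ := lintegral_map_le _ _
  -- measurability of the V-part
  have hVVmeas : Measurable fun x => ((∑ j ∈ Finset.range J, (v j x)^2)^(1/2:ℝ)) ^ p := by
    have h0 : Measurable fun x => ∑ j ∈ Finset.range J, (v j x)^2 := by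
      refine Finset.measurable_sum _ fun j hj => ?_
      simp only [hvdef]
      exact ((hvmeas j (Finset.mem_range.mp hj)).nnnorm.coe_nnreal_ennreal).pow_const 2
    exact ENNReal.continuous_rpow_const.measurable.comp
      (ENNReal.continuous_rpow_const.measurable.comp h0)
  have h2pne : ((2:ℝ≥0∞)^p) ≠ ⊤ :=
    (ENNReal.rpow_lt_top_of_nonneg hp0.le (by norm_num)).ne
  -- step 2: split the L^p norm
  have step2 : eLpR μ p (fun x => (∑ j ∈ Finset.range J, (w j (S x))^2)^(1/2:ℝ))
      ≤ 2 * eLpR μ p (fun x => (∑ j ∈ Finset.range J, (u j x)^2)^(1/2:ℝ))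
        + 2 * eLpR μ p (fun x => (∑ j ∈ Finset.range J, (v j x)^2)^(1/2:ℝ)) := by
    have hptwise : ∀ x, (((∑ j ∈ Finset.range J, (w j (S x))^2)^(1/2:ℝ))^p)
        ≤ (2:ℝ≥0∞)^p * ((((∑ j ∈ Finset.range J, (v j x)^2)^(1/2:ℝ))^p)
            + (((∑ j ∈ Finset.range J, (u j x)^2)^(1/2:ℝ))^p)) := by
      intro x
      refine le_trans (ENNReal.rpow_le_rpow (hpoint x) hp0.le) ?_
      generalize (∑ j ∈ Finset.range J, (u j x)^2)^(1/2:ℝ) = a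
      generalize (∑ j ∈ Finset.range J, (v j x)^2)^(1/2:ℝ) = b
      rcases le_total a b with h | h
      · calc (a+b)^p ≤ (2*b)^p := by
              refine ENNReal.rpow_le_rpow ?_ hp0.le
              rw [two_mul]; exact add_le_add_left h b
          _ = 2^p * b^p := ENNReal.mul_rpow_of_nonneg _ _ hp0.le
          _ ≤ _ := mul_le_mul_right le_self_add _
      · calc (a+b)^p ≤ (2*a)^p := by
              refine ENNReal.rpow_le_rpow ?_ hp0.le
              rw [two_mul]; exact add_le_add_right h a
          _ = 2^p * a^p := ENNReal.mul_rpow_of_nonneg _ _ hp0.le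
          _ ≤ _ := mul_le_mul_right le_add_self _
    simp only [eLpR]
    calc (∫⁻ x, (((∑ j ∈ Finset.range J, (w j (S x))^2)^(1/2:ℝ))^p) ∂μ)^(1/p)
        ≤ (∫⁻ x, (2:ℝ≥0∞)^p * ((((∑ j ∈ Finset.range J, (v j x)^2)^(1/2:ℝ))^p)
            + (((∑ j ∈ Finset.range J, (u j x)^2)^(1/2:ℝ))^p)) ∂μ)^(1/p) :=
          ENNReal.rpow_le_rpow (lintegral_mono hptwise) (by positivity)
      _ = ((2:ℝ≥0∞)^p * ∫⁻ x, ((((∑ j ∈ Finset.range J, (v j x)^2)^(1/2:ℝ))^p)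
            + (((∑ j ∈ Finset.range J, (u j x)^2)^(1/2:ℝ))^p)) ∂μ)^(1/p) := by
          rw [lintegral_const_mul' _ _ h2pne]
      _ = ((2:ℝ≥0∞)^p * ((∫⁻ x, (((∑ j ∈ Finset.range J, (v j x)^2)^(1/2:ℝ))^p) ∂μ)
            + (∫⁻ x, (((∑ j ∈ Finset.range J, (u j x)^2)^(1/2:ℝ))^p) ∂μ)))^(1/p) := by
          rw [lintegral_add_left hVVmeas]
      _ = 2 * (((∫⁻ x, (((∑ j ∈ Finset.range J, (v j x)^2)^(1/2:ℝ))^p) ∂μ)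
            + (∫⁻ x, (((∑ j ∈ Finset.range J, (u j x)^2)^(1/2:ℝ))^p) ∂μ)))^(1/p) := by
          rw [ENNReal.mul_rpow_of_nonneg _ _ (by positivity), ← ENNReal.rpow_mul,
            mul_one_div, div_self hp0.ne', ENNReal.rpow_one]
      _ ≤ 2 * ((∫⁻ x, (((∑ j ∈ Finset.range J, (v j x)^2)^(1/2:ℝ))^p) ∂μ)^(1/p)
            + (∫⁻ x, (((∑ j ∈ Finset.range J, (u j x)^2)^(1/2:ℝ))^p) ∂μ)^(1/p)) := by
          refine mul_le_mul_right (ENNReal.rpow_add_le_add_rpow _ _ (by positivity) ?_) _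
          rw [div_le_one hp0]; exact hp1
      _ = _ := by ring
  -- the L^p norm of f is shift invariant
  have hff' : eLpR μ p (fun x => (‖f' x‖₊ : ℝ≥0∞)) = eLpR μ p (fun x => (‖f x‖₊ : ℝ≥0∞)) := by
    simp only [eLpR]
    congr 1
    have hmeas : Measurable fun y => ((‖f y‖₊ : ℝ≥0∞)) ^ p :=
      ENNReal.continuous_rpow_const.measurable.comp hf.nnnorm.coe_nnreal_ennreal
    exact hS.lintegral_comp (f := fun y => ((‖f y‖₊ : ℝ≥0∞)) ^ p) hmeas
  -- step 3: the U-part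
  set F₁ : ℕ → X → ℂ := fun ι => if ι < J then g₁ ι else 0 with hF₁def
  have hF₁meas : ∀ ι, Measurable (F₁ ι) := by
    intro ι
    by_cases hι : ι < J
    · simpa only [hF₁def, if_pos hι] using hg₁meas ι hι
    · simpa only [hF₁def, if_neg hι] using (measurable_zero : Measurable (0 : X → ℂ))
  have step3 : eLpR μ p (fun x => (∑ j ∈ Finset.range J, (u j x)^2)^(1/2:ℝ))
      ≤ Cp * (Cp * eLpR μ p (fun x => (‖f x‖₊ : ℝ≥0∞))) := by
    have hUle : eLpR μ p (fun x => (∑ j ∈ Finset.range J, (u j x)^2)^(1/2:ℝ))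
        ≤ eLpR μ p (fun x => (∑' ι : ℕ,
            (⨆ (M : ℕ) (_ : 0 < M), (‖A1 M (F₁ ι) x‖₊ : ℝ≥0∞)) ^ 2) ^ (1 / 2 : ℝ)) := by
      simp only [eLpR]
      refine ENNReal.rpow_le_rpow (lintegral_mono fun x =>
        ENNReal.rpow_le_rpow (ENNReal.rpow_le_rpow ?_ (by norm_num)) (by positivity)) (by positivity)
      refine le_trans (le_of_eq (Finset.sum_congr rfl fun j hj => ?_))
        (ENNReal.sum_le_tsum (Finset.range J))
      rw [Finset.mem_range] at hj
      simp only [hudef, hF₁def, if_pos hj]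
    refine le_trans hUle (le_trans (hmax1 F₁ hF₁meas) ?_)
    refine mul_le_mul_right ?_ Cp
    have hoscb := hosc2 f' hf' J (fun j => (I j).2)
      (fun j hj => (hIpos j hj).2) (fun j hj => (hImono j hj).2)
    refine le_trans ?_ (le_trans hoscb (le_of_eq (by rw [hff'])))
    simp only [eLpR]
    refine ENNReal.rpow_le_rpow (lintegral_mono fun x =>
      ENNReal.rpow_le_rpow (ENNReal.rpow_le_rpow ?_ (by norm_num)) (by positivity)) (by positivity)
    have htsum : (∑' ι : ℕ, (‖F₁ ι x‖₊ : ℝ≥0∞) ^ 2)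
        = ∑ j ∈ Finset.range J, (‖g₁ j x‖₊ : ℝ≥0∞) ^ 2 := by
      rw [tsum_eq_sum (s := Finset.range J) ?_]
      · exact Finset.sum_congr rfl fun j hj => by
          rw [Finset.mem_range] at hj
          simp only [hF₁def, if_pos hj]
      · intro ι hι
        rw [Finset.mem_range, not_lt] at hι
        simp only [hF₁def, if_neg (not_lt.mpr hι)]
        simp
    rw [htsum]
    refine Finset.sum_le_sum fun j hj => ?_
    rw [Finset.mem_range] at hj
    refine pow_le_pow_left' ?_ 2
    rw [hg₁norm]
    obtain ⟨M₀, hM₀mem, hM₀⟩ := Finset.exists_mem_eq_sup (Finset.Ico (I j).2 (I (j+1)).2)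
      (Finset.nonempty_Ico.mpr (hImono j hj).2)
      (fun M => ‖A2 M f' x - A2 ((I j).2) f' x‖₊)
    rw [hM₀]
    exact le_iSup₂ (f := fun (M : ℕ) (_ : (I j).2 ≤ M ∧ M < (I (j+1)).2) =>
      (‖A2 M f' x - A2 ((I j).2) f' x‖₊ : ℝ≥0∞)) M₀ (Finset.mem_Ico.mp hM₀mem)
  -- step 4: the V-part
  set F₂ : ℕ → X → ℂ := fun ι => if ι < J then g₂ ι else 0 with hF₂def
  have hF₂meas : ∀ ι, Measurable (F₂ ι) := by
    intro ι
    by_cases hι : ι < J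
    · simpa only [hF₂def, if_pos hι] using hg₂meas ι hι
    · simpa only [hF₂def, if_neg hι] using (measurable_zero : Measurable (0 : X → ℂ))
  have step4 : eLpR μ p (fun x => (∑ j ∈ Finset.range J, (v j x)^2)^(1/2:ℝ))
      ≤ Cp * (Cp * eLpR μ p (fun x => (‖f x‖₊ : ℝ≥0∞))) := by
    have hVle : eLpR μ p (fun x => (∑ j ∈ Finset.range J, (v j x)^2)^(1/2:ℝ))
        ≤ eLpR μ p (fun x => (∑' ι : ℕ,
            (⨆ (M : ℕ) (_ : 0 < M), (‖A2 M (F₂ ι) x‖₊ : ℝ≥0∞)) ^ 2) ^ (1 / 2 : ℝ)) := by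
      simp only [eLpR]
      refine ENNReal.rpow_le_rpow (lintegral_mono fun x =>
        ENNReal.rpow_le_rpow (ENNReal.rpow_le_rpow ?_ (by norm_num)) (by positivity)) (by positivity)
      refine le_trans (Finset.sum_le_sum (fun j hj => ?_))
        (ENNReal.sum_le_tsum (Finset.range J))
      rw [Finset.mem_range] at hj
      refine pow_le_pow_left' ?_ 2
      simp only [hvdef, hF₂def, if_pos hj]
      exact le_iSup₂ (f := fun (M : ℕ) (_ : 0 < M) => (‖A2 M (g₂ j) x‖₊ : ℝ≥0∞))
        ((I j).2) (hIpos j hj.le).2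
    refine le_trans hVle (le_trans (hmax2 F₂ hF₂meas) ?_)
    refine mul_le_mul_right ?_ Cp
    have hoscb := hosc1 f' hf' J (fun j => (I j).1)
      (fun j hj => (hIpos j hj).1) (fun j hj => (hImono j hj).1)
    refine le_trans ?_ (le_trans hoscb (le_of_eq (by rw [hff'])))
    simp only [eLpR]
    refine ENNReal.rpow_le_rpow (lintegral_mono fun x =>
      ENNReal.rpow_le_rpow (ENNReal.rpow_le_rpow ?_ (by norm_num)) (by positivity)) (by positivity)
    have htsum : (∑' ι : ℕ, (‖F₂ ι x‖₊ : ℝ≥0∞) ^ 2)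
        = ∑ j ∈ Finset.range J, (‖g₂ j x‖₊ : ℝ≥0∞) ^ 2 := by
      rw [tsum_eq_sum (s := Finset.range J) ?_]
      · exact Finset.sum_congr rfl fun j hj => by
          rw [Finset.mem_range] at hj
          simp only [hF₂def, if_pos hj]
      · intro ι hι
        rw [Finset.mem_range, not_lt] at hι
        simp only [hF₂def, if_neg (not_lt.mpr hι)]
        simp
    rw [htsum]
    refine Finset.sum_le_sum fun j hj => ?_
    rw [Finset.mem_range] at hj
    refine pow_le_pow_left' ?_ 2
    rw [hg₂norm]
    obtain ⟨M₀, hM₀mem, hM₀⟩ := Finset.exists_mem_eq_sup (Finset.Ico (I j).1 (I (j+1)).1)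
      (Finset.nonempty_Ico.mpr (hImono j hj).1)
      (fun M => ‖A1 M f' x - A1 ((I j).1) f' x‖₊)
    rw [hM₀]
    exact le_iSup₂ (f := fun (M : ℕ) (_ : (I j).1 ≤ M ∧ M < (I (j+1)).1) =>
      (‖A1 M f' x - A1 ((I j).1) f' x‖₊ : ℝ≥0∞)) M₀ (Finset.mem_Ico.mp hM₀mem)
  -- put everything together
  show eLpR μ p (fun y => (∑ j ∈ Finset.range J, (w j y)^2)^(1/2:ℝ))
      ≤ 4 * Cp * Cp * eLpR μ p (fun x => (‖f x‖₊ : ℝ≥0∞))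
  calc eLpR μ p (fun y => (∑ j ∈ Finset.range J, (w j y)^2)^(1/2:ℝ))
      ≤ eLpR μ p (fun x => (∑ j ∈ Finset.range J, (w j (S x))^2)^(1/2:ℝ)) := step1
    _ ≤ 2 * eLpR μ p (fun x => (∑ j ∈ Finset.range J, (u j x)^2)^(1/2:ℝ))
        + 2 * eLpR μ p (fun x => (∑ j ∈ Finset.range J, (v j x)^2)^(1/2:ℝ)) := step2
    _ ≤ 2 * (Cp * (Cp * eLpR μ p (fun x => (‖f x‖₊ : ℝ≥0∞))))
        + 2 * (Cp * (Cp * eLpR μ p (fun x => (‖f x‖₊ : ℝ≥0∞)))) := by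
        exact add_le_add (mul_le_mul_right step3 2) (mul_le_mul_right step4 2)
    _ = 4 * Cp * Cp * eLpR μ p (fun x => (‖f x‖₊ : ℝ≥0∞)) := by ring
end

section
/- Let (X, ℬ(X), μ) be a σ-finite measure space, k ∈ ℤ₊, and (𝔞_t : t ∈ ℕ^k) a k-parameter family of measurable functions on X. Suppose there exist p ∈ [1, ∞) and C_p > 0 such that sup_{J ∈ ℤ₊} sup_{I ∈ 𝔖_J(ℕ)} ‖O_{Ī,J}(𝔞_t : t ∈ ℕ^k)‖_{L^p(X)} ≤ C_p < ∞, where Ī ∈ 𝔖_J(ℕ^k) is the diagonal sequence Ī_i = (I_i, …, I_i). Then the limit lim_{min{t₁,…,t_k} → ∞} 𝔞_{(t₁,…,t_k)} exists μ-almost everywhere on X. -/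
open MeasureTheory
open scoped ENNReal

/-- Uniform `L^p` bounds on the diagonal multi-parameter oscillation seminorms of a
family `(𝔞_t : t ∈ ℕ^k)` of measurable functions on a σ-finite measure space imply
the μ-a.e. existence of the limit as `min{t₁,…,t_k} → ∞`. -/
theorem stmt_18 {X : Type*} [MeasurableSpace X] (μ : Measure X) [SigmaFinite μ]
    (k : ℕ) (hk : 0 < k) (a : (Fin k → ℕ) → X → ℂ) (ha : ∀ t, Measurable (a t))
    (p : ℝ) (hp : 1 ≤ p) (C : ℝ≥0∞) (hC : C ≠ ∞)
    (hosc : ∀ (J : ℕ) (I : ℕ → ℕ), 0 < J → (∀ i < J, I i < I (i + 1)) →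
      eLpR μ p (fun x => (∑ j ∈ Finset.range J,
          (⨆ (t : Fin k → ℕ) (_ : ∀ i, I j ≤ t i ∧ t i < I (j + 1)),
            (‖a t x - a (fun _ => I j) x‖₊ : ℝ≥0∞)) ^ 2) ^ (1 / 2 : ℝ)) ≤ C) :
    ∀ᵐ x ∂μ, ∃ L : ℂ,
      Filter.Tendsto (fun t : Fin k → ℕ => a t x) Filter.atTop (nhds L) := by
  classical
  set Bs : ℝ → Set X := fun ε =>
    {x | ∀ N : ℕ, ∃ t : Fin k → ℕ, (∀ i, N ≤ t i) ∧
      ε ≤ dist (a t x) (a (fun _ => N) x)} with hBs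
  have main : ∀ ε : ℝ, 0 < ε → μ (Bs ε) = 0 := by
    intro ε hε
    classical
    have hp0 : (0:ℝ) < p := lt_of_lt_of_le one_pos hp
    set B : Set X := {x | ∀ N : ℕ, ∃ t : Fin k → ℕ, (∀ i, N ≤ t i) ∧
        ε ≤ dist (a t x) (a (fun _ => N) x)} with hBdef
    by_contra hne
    have hBmeas : MeasurableSet B := by
      have hEq : B = ⋂ N : ℕ, ⋃ (t : Fin k → ℕ) (_ : ∀ i, N ≤ t i),
          {x | ε ≤ dist (a t x) (a (fun _ => N) x)} := by
        ext x
        simp [hBdef, Set.mem_iInter, Set.mem_iUnion]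
      rw [hEq]
      exact MeasurableSet.iInter fun N => MeasurableSet.iUnion fun t =>
        MeasurableSet.iUnion fun _ => measurableSet_le measurable_const
          ((ha t).dist (ha _))
    obtain ⟨E, hEmeas, hEB, hE0, hEtop⟩ :=
      Measure.exists_subset_measure_lt_top hBmeas (pos_iff_ne_zero.mpr hne)
    have hE0' : μ E ≠ 0 := hE0.ne'
    have hET : μ E ≠ ∞ := hEtop.ne
    -- the sets F n m
    set F : ℕ → ℕ → Set X := fun n m => E ∩ ⋃ (t : Fin k → ℕ)
        (_ : ∀ i, n ≤ t i ∧ t i < m), {x | ε ≤ dist (a t x) (a (fun _ => n) x)} with hFdef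
    have hFmeas : ∀ n m, MeasurableSet (F n m) := fun n m =>
      hEmeas.inter (MeasurableSet.iUnion fun t => MeasurableSet.iUnion fun _ =>
        measurableSet_le measurable_const ((ha t).dist (ha _)))
    have hFE : ∀ n m, F n m ⊆ E := fun n m => Set.inter_subset_left
    have hFmono : ∀ n, Monotone (F n) := by
      intro n m₁ m₂ hm
      refine Set.inter_subset_inter_right _ ?_
      refine Set.iUnion_mono fun t => ?_
      exact Set.iUnion_mono' fun h => ⟨fun i => ⟨(h i).1, lt_of_lt_of_le (h i).2 hm⟩, le_rfl⟩
    have hcover : ∀ n, E ⊆ ⋃ m, F n m := by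
      intro n x hx
      obtain ⟨t, ht, hd⟩ := hEB hx n
      refine Set.mem_iUnion.mpr ⟨(∑ i, t i) + 1, hx, ?_⟩
      refine Set.mem_iUnion.mpr ⟨t, ?_⟩
      exact Set.mem_iUnion.mpr ⟨fun i => ⟨ht i, Nat.lt_succ_of_le
        (Finset.single_le_sum (fun i _ => Nat.zero_le _) (Finset.mem_univ i))⟩, hd⟩
    have hg : ∀ n, ∃ m, n < m ∧ μ E / 2 ≤ μ (F n m) := by
      intro n
      have hsup : μ E ≤ ⨆ m, μ (F n m) := by
        calc μ E ≤ μ (⋃ m, F n m) := measure_mono (hcover n)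
          _ = ⨆ m, μ (F n m) := (hFmono n).measure_iUnion
      have hlt : μ E / 2 < ⨆ m, μ (F n m) :=
        lt_of_lt_of_le (ENNReal.half_lt_self hE0' hET) hsup
      obtain ⟨m, hm⟩ := lt_iSup_iff.mp hlt
      exact ⟨max m (n + 1), lt_of_lt_of_le (Nat.lt_succ_self n) (le_max_right _ _),
        le_trans hm.le (measure_mono (hFmono n (le_max_left _ _)))⟩
    choose g hg1 hg2 using hg
    set I : ℕ → ℕ := fun j => g^[j] 0 with hIdef
    have hIsucc : ∀ j, I (j + 1) = g (I j) := fun j => Function.iterate_succ_apply' g j 0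
    have hImono : ∀ j, I j < I (j + 1) := fun j => by rw [hIsucc j]; exact hg1 (I j)
    have hFjmeas : ∀ j, μ E / 2 ≤ μ (F (I j) (I (j + 1))) := fun j => by
      rw [hIsucc j]; exact hg2 (I j)
    -- constants
    set δ' := ENNReal.ofReal ε with hδ'def
    have hδ0 : δ' ≠ 0 := (ENNReal.ofReal_pos.mpr hε).ne'
    have hδT : δ' ≠ ∞ := ENNReal.ofReal_ne_top
    have hq0 : (0:ℝ≥0∞) < μ E / 4 := ENNReal.div_pos hE0' (by norm_num)
    have hqT : μ E / 4 ≠ ∞ := (ENNReal.div_lt_top hET (by norm_num)).ne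
    set K := δ' * (μ E / 4) ^ (1 / p) with hKdef
    have hK0 : K ≠ 0 := mul_ne_zero hδ0 (ENNReal.rpow_pos hq0 hqT).ne'
    have hKT : K ≠ ∞ := ENNReal.mul_ne_top hδT
      (ENNReal.rpow_ne_top_of_nonneg (by positivity) hqT)
    obtain ⟨M₀, hM₀⟩ := ENNReal.exists_nat_gt (ENNReal.div_lt_top hC hK0).ne
    set M := M₀ + 1 with hMdef
    have hM0 : (M:ℝ≥0∞) ≠ 0 := by
      simp [hMdef]
    have hMT : (M:ℝ≥0∞) ≠ ∞ := ENNReal.natCast_ne_top M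
    have hMgt : C / K < (M:ℝ≥0∞) :=
      lt_of_lt_of_le hM₀ (by exact_mod_cast Nat.le_succ M₀)
    have hCK : C < (M:ℝ≥0∞) * K :=
      (ENNReal.div_lt_iff (Or.inl hK0) (Or.inl hKT)).mp hMgt
    set J := 4 * M ^ 2 with hJdef
    have hJpos : 0 < J := by positivity
    have hO : eLpR μ p (fun x => (∑ j ∈ Finset.range J,
        (⨆ (t : Fin k → ℕ) (_ : ∀ i, I j ≤ t i ∧ t i < I (j + 1)),
          (‖a t x - a (fun _ => I j) x‖₊ : ℝ≥0∞)) ^ 2) ^ (1 / 2 : ℝ)) ≤ C :=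
      hosc J I hJpos (fun i _ => hImono i)
    -- counting function
    set Fs : ℕ → Set X := fun j => F (I j) (I (j + 1)) with hFsdef
    set Nc : X → ℝ≥0∞ := fun x => ∑ j ∈ Finset.range J, (Fs j).indicator 1 x with hNcdef
    have hNcmeas : Measurable Nc :=
      Finset.measurable_sum _ fun j _ => measurable_one.indicator (hFmeas _ _)
    set G := {x | ((M:ℝ≥0∞)) ^ 2 ≤ Nc x} with hGdef
    have hGmeas : MeasurableSet G := measurableSet_le measurable_const hNcmeas
    have hNle : ∀ x, Nc x ≤ (J:ℝ≥0∞) := by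
      intro x
      calc Nc x ≤ ∑ _j ∈ Finset.range J, (1:ℝ≥0∞) := by
            refine Finset.sum_le_sum fun j _ => ?_
            by_cases hx : x ∈ Fs j <;> simp [Set.indicator, hx]
        _ = (J:ℝ≥0∞) := by simp
    have hint1 : (J:ℝ≥0∞) * (μ E / 2) ≤ ∫⁻ x, Nc x ∂μ := by
      rw [hNcdef]
      rw [lintegral_finset_sum _ (fun j _ => measurable_one.indicator (hFmeas _ _))]
      calc (J:ℝ≥0∞) * (μ E / 2) = ∑ _j ∈ Finset.range J, μ E / 2 := by
            simp [Finset.sum_const, nsmul_eq_mul]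
        _ ≤ ∑ j ∈ Finset.range J, μ (Fs j) := Finset.sum_le_sum fun j _ => hFjmeas j
        _ = ∑ j ∈ Finset.range J, ∫⁻ x, (Fs j).indicator 1 x ∂μ :=
            Finset.sum_congr rfl fun j _ => (lintegral_indicator_one (hFmeas _ _)).symm
    have hint2 : ∫⁻ x, Nc x ∂μ ≤ (J:ℝ≥0∞) * μ G + (M:ℝ≥0∞) ^ 2 * μ E := by
      have hpt : ∀ x, Nc x ≤ (J:ℝ≥0∞) * G.indicator 1 x + (M:ℝ≥0∞) ^ 2 * E.indicator 1 x := by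
        intro x
        by_cases hxG : x ∈ G
        · calc Nc x ≤ (J:ℝ≥0∞) := hNle x
            _ ≤ _ := by
              simp only [Set.indicator_of_mem hxG, Pi.one_apply, mul_one]
              exact le_add_right le_rfl
        · by_cases hxE : x ∈ E
          · have h1 : Nc x ≤ (M:ℝ≥0∞) ^ 2 := (lt_of_not_ge hxG).le
            calc Nc x ≤ (M:ℝ≥0∞) ^ 2 := h1
              _ ≤ _ := by
                simp only [Set.indicator_of_mem hxE, Pi.one_apply, mul_one]
                exact le_add_left le_rfl
          · have h0 : Nc x = 0 := by
              refine Finset.sum_eq_zero fun j _ => ?_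
              exact Set.indicator_of_notMem (fun hx => hxE (hFE _ _ hx)) _
            simp [h0]
      calc ∫⁻ x, Nc x ∂μ
          ≤ ∫⁻ x, ((J:ℝ≥0∞) * G.indicator 1 x + (M:ℝ≥0∞) ^ 2 * E.indicator 1 x) ∂μ :=
            lintegral_mono hpt
        _ = (J:ℝ≥0∞) * μ G + (M:ℝ≥0∞) ^ 2 * μ E := by
            rw [lintegral_add_left ((measurable_one.indicator hGmeas).const_mul _),
              lintegral_const_mul _ (measurable_one.indicator hGmeas),
              lintegral_const_mul _ (measurable_one.indicator hEmeas),
              lintegral_indicator_one hGmeas, lintegral_indicator_one hEmeas]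
    have hGquarter : μ E / 4 ≤ μ G := by
      have h := le_trans hint1 hint2
      have hJcast : (J:ℝ≥0∞) = 4 * (M:ℝ≥0∞) ^ 2 := by push_cast [hJdef]; ring
      rw [hJcast] at h
      have h2 : (2:ℝ≥0∞) * 2⁻¹ = 1 := ENNReal.mul_inv_cancel (by norm_num) (by norm_num)
      have l1 : (4:ℝ≥0∞) * (M:ℝ≥0∞) ^ 2 * (μ E / 2)
          = (M:ℝ≥0∞) ^ 2 * μ E + (M:ℝ≥0∞) ^ 2 * μ E := by
        rw [div_eq_mul_inv]
        calc (4:ℝ≥0∞) * (M:ℝ≥0∞) ^ 2 * (μ E * 2⁻¹)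
            = ((M:ℝ≥0∞) ^ 2 * μ E + (M:ℝ≥0∞) ^ 2 * μ E) * (2 * 2⁻¹) := by ring
          _ = _ := by rw [h2, mul_one]
      rw [l1] at h
      have hMET : (M:ℝ≥0∞) ^ 2 * μ E ≠ ∞ :=
        ENNReal.mul_ne_top (ENNReal.pow_ne_top hMT) hET
      have h3 : (M:ℝ≥0∞) ^ 2 * μ E ≤ (M:ℝ≥0∞) ^ 2 * (4 * μ G) := by
        have h3' : (M:ℝ≥0∞) ^ 2 * μ E ≤ 4 * (M:ℝ≥0∞) ^ 2 * μ G :=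
          (WithTop.add_le_add_iff_right hMET).mp h
        have hre : (4:ℝ≥0∞) * (M:ℝ≥0∞) ^ 2 * μ G = (M:ℝ≥0∞) ^ 2 * (4 * μ G) := by ring
        rw [hre] at h3'
        exact h3'
      have h4 : μ E ≤ 4 * μ G :=
        (ENNReal.mul_le_mul_iff_right (pow_ne_zero _ hM0) (ENNReal.pow_ne_top hMT)).mp h3
      rw [ENNReal.div_le_iff_le_mul (Or.inl (by norm_num)) (Or.inl (by norm_num))]
      calc μ E ≤ 4 * μ G := h4
        _ = μ G * 4 := mul_comm _ _
    -- pointwise lower bound on the oscillation terms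
    have hterm : ∀ j x, x ∈ Fs j →
        δ' ≤ ⨆ (t : Fin k → ℕ) (_ : ∀ i, I j ≤ t i ∧ t i < I (j + 1)),
          (‖a t x - a (fun _ => I j) x‖₊ : ℝ≥0∞) := by
      intro j x hx
      obtain ⟨hxE, hx2⟩ := hx
      rw [Set.mem_iUnion] at hx2
      obtain ⟨t, hx2⟩ := hx2
      rw [Set.mem_iUnion] at hx2
      obtain ⟨htc, hd⟩ := hx2
      have h1 : δ' ≤ (‖a t x - a (fun _ => I j) x‖₊ : ℝ≥0∞) := by
        rw [← enorm_eq_nnnorm, ← ofReal_norm, ← dist_eq_norm]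
        exact ENNReal.ofReal_le_ofReal hd
      exact h1.trans (le_iSup₂ (f := fun (t : Fin k → ℕ)
        (_ : ∀ i, I j ≤ t i ∧ t i < I (j + 1)) =>
          (‖a t x - a (fun _ => I j) x‖₊ : ℝ≥0∞)) t htc)
    have hsum : ∀ x, x ∈ G → (δ' * M) ^ 2 ≤ ∑ j ∈ Finset.range J,
        (⨆ (t : Fin k → ℕ) (_ : ∀ i, I j ≤ t i ∧ t i < I (j + 1)),
          (‖a t x - a (fun _ => I j) x‖₊ : ℝ≥0∞)) ^ 2 := by
      intro x hxG
      have h1 : δ' ^ 2 * Nc x ≤ ∑ j ∈ Finset.range J,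
          (⨆ (t : Fin k → ℕ) (_ : ∀ i, I j ≤ t i ∧ t i < I (j + 1)),
            (‖a t x - a (fun _ => I j) x‖₊ : ℝ≥0∞)) ^ 2 := by
        rw [hNcdef, Finset.mul_sum]
        refine Finset.sum_le_sum fun j _ => ?_
        by_cases hx : x ∈ Fs j
        · simp only [Set.indicator_of_mem hx, Pi.one_apply, mul_one]
          exact pow_le_pow_left' (hterm j x hx) 2
        · simp [Set.indicator_of_notMem hx]
      calc (δ' * M) ^ 2 = δ' ^ 2 * (M:ℝ≥0∞) ^ 2 := by ring
        _ ≤ δ' ^ 2 * Nc x := mul_le_mul_right hxG _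
        _ ≤ _ := h1
    have hsq : ∀ y : ℝ≥0∞, (y ^ 2 : ℝ≥0∞) ^ (1 / 2 : ℝ) = y := by
      intro y
      rw [← ENNReal.rpow_natCast y 2, ← ENNReal.rpow_mul]
      norm_num
    have hpt2 : ∀ x, G.indicator (fun _ => (δ' * M) ^ p) x ≤
        ((∑ j ∈ Finset.range J,
        (⨆ (t : Fin k → ℕ) (_ : ∀ i, I j ≤ t i ∧ t i < I (j + 1)),
          (‖a t x - a (fun _ => I j) x‖₊ : ℝ≥0∞)) ^ 2) ^ (1 / 2 : ℝ)) ^ p := by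
      intro x
      by_cases hxG : x ∈ G
      · rw [Set.indicator_of_mem hxG]
        refine ENNReal.rpow_le_rpow ?_ hp0.le
        rw [← hsq (δ' * M)]
        exact ENNReal.rpow_le_rpow (hsum x hxG) (by norm_num)
      · simp [Set.indicator_of_notMem hxG]
    have hbig : (M:ℝ≥0∞) * K ≤ eLpR μ p (fun x => (∑ j ∈ Finset.range J,
        (⨆ (t : Fin k → ℕ) (_ : ∀ i, I j ≤ t i ∧ t i < I (j + 1)),
          (‖a t x - a (fun _ => I j) x‖₊ : ℝ≥0∞)) ^ 2) ^ (1 / 2 : ℝ)) := by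
      have hle : (δ' * M) ^ p * μ G ≤ ∫⁻ x, ((∑ j ∈ Finset.range J,
          (⨆ (t : Fin k → ℕ) (_ : ∀ i, I j ≤ t i ∧ t i < I (j + 1)),
            (‖a t x - a (fun _ => I j) x‖₊ : ℝ≥0∞)) ^ 2) ^ (1 / 2 : ℝ)) ^ p ∂μ := by
        rw [← lintegral_indicator_const hGmeas]
        exact lintegral_mono hpt2
      have h4 : (δ' * M) ^ p * (μ E / 4) ≤ (δ' * M) ^ p * μ G := mul_le_mul_right hGquarter _
      have heq : ((δ' * (M:ℝ≥0∞)) ^ p * (μ E / 4)) ^ (1 / p : ℝ) = (M:ℝ≥0∞) * K := by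
        rw [ENNReal.mul_rpow_of_nonneg _ _ (by positivity), ← ENNReal.rpow_mul,
          mul_one_div_cancel hp0.ne', ENNReal.rpow_one, hKdef]
        ring
      rw [eLpR, ← heq]
      exact ENNReal.rpow_le_rpow (le_trans h4 hle) (by positivity)
    exact absurd (hbig.trans hO) (not_le.mpr hCK)
  have hnull : μ (⋃ n : ℕ, Bs (1 / (n + 1))) = 0 :=
    measure_iUnion_null fun n => main _ (by positivity)
  have hsub : {x | ¬ ∃ L : ℂ,
      Filter.Tendsto (fun t : Fin k → ℕ => a t x) Filter.atTop (nhds L)} ⊆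
      ⋃ n : ℕ, Bs (1 / (n + 1)) := by
    intro x hx
    have hnc : ¬ CauchySeq (fun t : Fin k → ℕ => a t x) := by
      intro hcs
      exact hx (cauchySeq_tendsto_of_complete hcs)
    rw [Metric.cauchySeq_iff] at hnc
    push_neg at hnc
    obtain ⟨ε, hε, H⟩ := hnc
    obtain ⟨n, hn⟩ := exists_nat_one_div_lt (half_pos hε)
    refine Set.mem_iUnion.mpr ⟨n, ?_⟩
    intro N
    obtain ⟨s, hs, t, ht, hd⟩ := H (fun _ => N)
    have hs' : ∀ i, N ≤ s i := fun i => hs i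
    have ht' : ∀ i, N ≤ t i := fun i => ht i
    have htri : ε ≤ dist (a s x) (a (fun _ => N) x) + dist (a t x) (a (fun _ => N) x) := by
      calc ε ≤ dist (a s x) (a t x) := hd
        _ ≤ _ := dist_triangle_right _ _ _
    rcases le_or_gt (ε / 2) (dist (a s x) (a (fun _ => N) x)) with h | h
    · exact ⟨s, hs', le_trans hn.le h⟩
    · exact ⟨t, ht', le_trans hn.le (by linarith)⟩
  exact ae_iff.mpr (measure_mono_null hsub hnull)
end
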